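/- arXiv:2101.03755 — 15 statements merged into one kernel-verified Lean document; each statement's English description precedes it below -/
import Mathlib

section
/- Let f : ℝⁿ → ℝ be a continuous scaling-invariant function with respect to 0 with f(0) = 0. Then for every x ∈ ℝⁿ, the function f_x : [0,∞) → ℝ, t ↦ f(tx), is either constant equal to 0 on [0,∞) or strictly monotonic (strictly increasing or strictly decreasing) on [0,∞). -/
lemma aux_mono (g : ℝ → ℝ) (hg : Continuous g)
    (hsi : ∀ s t ρ : ℝ, 0 < ρ → (g s ≤ g t ↔ g (ρ * s) ≤ g (ρ * t)))
    (h0 : g 0 = 0) (h1 : 0 < g 1) : StrictMonoOn g (Set.Ici 0) := by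
  have pos : ∀ t : ℝ, 0 < t → 0 < g t := by
    intro t ht
    by_contra h
    push_neg at h
    have h' : g 1 ≤ g 0 := by
      have := (hsi 1 0 t ht).mpr
      simpa [h0] using this (by simpa [h0] using h)
    linarith
  intro s hs t ht hst
  rcases eq_or_lt_of_le (Set.mem_Ici.mp hs) with rfl | hs'
  · simpa [h0] using pos t hst
  · by_contra hcon
    push_neg at hcon
    set r : ℝ := s / t with hr
    have ht' : 0 < t := lt_trans hs' hst
    have hr0 : 0 < r := div_pos hs' ht'
    have hr1 : r < 1 := (div_lt_one ht').mpr hst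
    have hrt : r * t = s := by rw [hr]; field_simp [ht'.ne']
    have hstep : ∀ m : ℕ, g t ≤ g (r ^ m * t) := by
      intro m
      induction m with
      | zero => simp
      | succ k ih =>
        have : g t ≤ g (r * t) := by rw [hrt]; exact hcon
        have h2 : g (r ^ k * t) ≤ g (r ^ k * (r * t)) :=
          (hsi t (r * t) (r ^ k) (pow_pos hr0 k)).mp this
        calc g t ≤ g (r ^ k * t) := ih
          _ ≤ g (r ^ (k + 1) * t) := by
              rw [pow_succ]; convert h2 using 2; ring
    have hlim : Filter.Tendsto (fun m : ℕ => g (r ^ m * t)) Filter.atTop (nhds 0) := by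
      have h1 : Filter.Tendsto (fun m : ℕ => r ^ m * t) Filter.atTop (nhds 0) := by
        simpa using (tendsto_pow_atTop_nhds_zero_of_lt_one hr0.le hr1).mul_const t
      have := (hg.tendsto 0).comp h1
      simpa [h0, Function.comp_def] using this
    have : g t ≤ 0 := ge_of_tendsto hlim (Filter.Eventually.of_forall hstep)
    exact absurd this (not_le.mpr (pos t ht'))

/-- A continuous scaling-invariant function `f : ℝⁿ → ℝ` w.r.t. `0`
with `f 0 = 0` has restrictions `t ↦ f (t • x)` to half-lines which are either
constant equal to `0` on `[0,∞)` or strictly monotonic on `[0,∞)`. -/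
theorem stmt_0 {n : ℕ} (f : EuclideanSpace ℝ (Fin n) → ℝ)
    (hf : Continuous f)
    (hsi : ∀ (x y : EuclideanSpace ℝ (Fin n)) (ρ : ℝ), 0 < ρ →
      (f x ≤ f y ↔ f (ρ • x) ≤ f (ρ • y)))
    (h0 : f 0 = 0) :
    ∀ x : EuclideanSpace ℝ (Fin n),
      (∀ t : ℝ, 0 ≤ t → f (t • x) = 0) ∨
      StrictMonoOn (fun t : ℝ => f (t • x)) (Set.Ici 0) ∨
      StrictAntiOn (fun t : ℝ => f (t • x)) (Set.Ici 0) := by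
  intro x
  set g : ℝ → ℝ := fun t => f (t • x) with hgdef
  have hg : Continuous g := hf.comp (continuous_id.smul continuous_const)
  have hg0 : g 0 = 0 := by simp [hgdef, h0]
  have hsig : ∀ s t ρ : ℝ, 0 < ρ → (g s ≤ g t ↔ g (ρ * s) ≤ g (ρ * t)) := by
    intro s t ρ hρ
    have := hsi (s • x) (t • x) ρ hρ
    simpa [hgdef, smul_smul] using this
  rcases lt_trichotomy (g 1) 0 with h1 | h1 | h1
  · right; right
    have hmono : StrictMonoOn (fun t => -g t) (Set.Ici 0) := by
      apply aux_mono (fun t => -g t) hg.neg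
      · intro s t ρ hρ
        simpa [neg_le_neg_iff] using (hsig t s ρ hρ)
      · simp [hg0]
      · simpa using h1
    intro a ha b hb hab
    have := hmono ha hb hab
    simpa using this
  · left
    intro t ht
    rcases eq_or_lt_of_le ht with rfl | ht'
    · exact hg0
    · have hle : g t ≤ 0 := by
        have := (hsig 1 0 t ht').mp (le_of_eq (by rw [h1, hg0]))
        simpa [hg0] using this
      have hge : 0 ≤ g t := by
        have := (hsig 0 1 t ht').mp (le_of_eq (by rw [h1, hg0]))
        simpa [hg0] using this
      linarith
  · right; left
    exact aux_mono g hg hsig hg0 h1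
end

section
/- Let φ : [0,∞) → ℝ be a continuous scaling-invariant function with φ(0) = 0. Then φ is either constant equal to 0 on [0,∞) or strictly monotonic (strictly increasing or strictly decreasing) on [0,∞). -/
lemma stmt_1_aux (φ : ℝ → ℝ)
    (hcont : ContinuousOn φ (Set.Ici 0))
    (hsi : ∀ s t : ℝ, 0 ≤ s → 0 ≤ t → ∀ ρ : ℝ, 0 < ρ →
      (φ s ≤ φ t ↔ φ (ρ * s) ≤ φ (ρ * t)))
    (h0 : φ 0 = 0) (h1 : 0 < φ 1) : StrictMonoOn φ (Set.Ici 0) := by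
  have hpos : ∀ t : ℝ, 0 < t → 0 < φ t := by
    intro t ht
    have := (hsi 1 0 zero_le_one le_rfl t ht).not
    simp only [mul_one, mul_zero] at this
    have h' : ¬ φ t ≤ φ 0 := this.mp (by rw [h0]; exact not_le.mpr h1)
    rw [h0] at h'
    exact not_le.mp h'
  intro s hs t ht hst
  rcases eq_or_lt_of_le (Set.mem_Ici.mp hs) with rfl | hs'
  · rw [h0]; exact hpos t hst
  · by_contra hcon
    push_neg at hcon
    -- φ t ≤ φ s, with 0 < s < t
    set r : ℝ := s / t with hr
    have htpos : 0 < t := lt_trans hs' hst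
    have hr0 : 0 < r := div_pos hs' htpos
    have hr1 : r < 1 := (div_lt_one htpos).mpr hst
    have hrt : r * t = s := div_mul_cancel₀ s (ne_of_gt htpos)
    have key : ∀ u : ℝ, 0 < u → φ u ≤ φ (r * u) := by
      intro u hu
      have h1' : φ t ≤ φ (r * t) := by rw [hrt]; exact hcon
      have := (hsi t (r * t) htpos.le (by positivity) (u / t) (by positivity)).mp h1'
      have e1 : u / t * t = u := div_mul_cancel₀ u (ne_of_gt htpos)
      have e2 : u / t * (r * t) = r * u := by field_simp
      rwa [e1, e2] at this
    have iter : ∀ n : ℕ, φ t ≤ φ (r ^ n * t) := by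
      intro n
      induction n with
      | zero => simp
      | succ n ih =>
        refine ih.trans ?_
        have := key (r ^ n * t) (by positivity)
        calc φ (r ^ n * t) ≤ φ (r * (r ^ n * t)) := this
          _ = φ (r ^ (n + 1) * t) := by ring_nf
    have htend : Filter.Tendsto (fun n : ℕ => r ^ n * t) Filter.atTop (nhdsWithin 0 (Set.Ici 0)) := by
      apply tendsto_nhdsWithin_of_tendsto_nhds_of_eventually_within
      · have := tendsto_pow_atTop_nhds_zero_of_lt_one hr0.le hr1
        simpa using this.mul_const t
      · filter_upwards with n
        exact Set.mem_Ici.mpr (by positivity)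
    have hφtend : Filter.Tendsto (fun n : ℕ => φ (r ^ n * t)) Filter.atTop (nhds 0) := by
      have := (hcont 0 Set.self_mem_Ici).tendsto.comp htend
      rwa [h0] at this
    have : φ t ≤ 0 := ge_of_tendsto hφtend (Filter.Eventually.of_forall iter)
    exact absurd this (not_le.mpr (hpos t htpos))

/-- A continuous scaling-invariant function `φ : [0,∞) → ℝ` with
`φ 0 = 0` is either constant equal to `0` on `[0,∞)` or strictly monotonic on `[0,∞)`. -/
theorem stmt_1 (φ : ℝ → ℝ)
    (hcont : ContinuousOn φ (Set.Ici 0))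
    (hsi : ∀ s t : ℝ, 0 ≤ s → 0 ≤ t → ∀ ρ : ℝ, 0 < ρ →
      (φ s ≤ φ t ↔ φ (ρ * s) ≤ φ (ρ * t)))
    (h0 : φ 0 = 0) :
    (∀ t : ℝ, 0 ≤ t → φ t = 0) ∨
    StrictMonoOn φ (Set.Ici 0) ∨ StrictAntiOn φ (Set.Ici 0) := by
  rcases lt_trichotomy (φ 1) 0 with h1 | h1 | h1
  · right; right
    have hmono : StrictMonoOn (fun x => -φ x) (Set.Ici 0) := by
      apply stmt_1_aux
      · exact hcont.neg
      · intro s t hs ht ρ hρ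
        simp only [neg_le_neg_iff]
        exact hsi t s ht hs ρ hρ
      · simp [h0]
      · simp [h1]
    intro s hs t ht hst
    have := hmono hs ht hst
    simpa using this
  · left
    intro t ht
    rcases eq_or_lt_of_le ht with rfl | ht'
    · exact h0
    · have hle := (hsi 1 0 zero_le_one le_rfl t ht').mp (by rw [h0, h1])
      have hge := (hsi 0 1 le_rfl zero_le_one t ht').mp (by rw [h0, h1])
      simp only [mul_one, mul_zero, h0] at hle hge
      linarith
  · right; left
    exact stmt_1_aux φ hcont hsi h0 h1
end

section
/- Let f : ℝⁿ → ℝ be a continuous scaling-invariant function with respect to 0 with f(0) = 0. If f has a local optimum (a local minimum or a local maximum) at some point x ∈ ℝⁿ, then f(tx) = f(0) for all t ≥ 0. In particular, if f attains a global minimum (respectively a global maximum) at some point, then 0 is a global argmin (respectively a global argmax) of f. -/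
open Topology Filter
lemma stmt_2_aux_min {n : ℕ} (f : EuclideanSpace ℝ (Fin n) → ℝ)
    (hf : Continuous f)
    (hsi : ∀ (x y : EuclideanSpace ℝ (Fin n)) (ρ : ℝ), 0 < ρ →
      (f x ≤ f y ↔ f (ρ • x) ≤ f (ρ • y)))
    {x : EuclideanSpace ℝ (Fin n)} (hx : IsLocalMin f x) : f x = f 0 := by
  have hev : ∀ᶠ ρ : ℝ in 𝓝 1, f x ≤ f (ρ • x) := by
    have hcont : Filter.Tendsto (fun ρ : ℝ => ρ • x) (𝓝 1) (𝓝 x) := by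
      have := (continuous_id.smul (continuous_const : Continuous fun _ : ℝ => x)).tendsto 1
      simp at this
      exact this.congr (fun _ => rfl)
    exact hcont.eventually hx
  have h0' : ∀ᶠ ρ : ℝ in 𝓝 1, (0:ℝ) < ρ := eventually_gt_nhds zero_lt_one
  -- pick ρ₀ ∈ (0,1)
  obtain ⟨ρ₀, ⟨hle0, hpos0⟩, hlt0⟩ :=
    ((((hev.and h0').filter_mono (nhdsWithin_le_nhds (s := Set.Iio 1)))).and
      eventually_mem_nhdsWithin).exists
  -- pick ρ₁ > 1
  obtain ⟨ρ₁, ⟨hle1, hpos1⟩, hgt1⟩ :=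
    ((((hev.and h0').filter_mono (nhdsWithin_le_nhds (s := Set.Ioi 1)))).and
      eventually_mem_nhdsWithin).exists
  have iter_lo : ∀ k : ℕ, f x ≤ f (ρ₀ ^ k • x) := by
    intro k
    induction k with
    | zero => simp
    | succ k ih =>
      have hk : (0:ℝ) < ρ₀ ^ k := pow_pos hpos0 k
      calc f x ≤ f (ρ₀ ^ k • x) := ih
        _ ≤ f (ρ₀ ^ k • ρ₀ • x) := (hsi x (ρ₀ • x) (ρ₀ ^ k) hk).mp hle0
        _ = f (ρ₀ ^ (k+1) • x) := by rw [smul_smul, ← pow_succ]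
  have hlim0 : Filter.Tendsto (fun k : ℕ => f (ρ₀ ^ k • x)) Filter.atTop (𝓝 (f 0)) := by
    have h1 : Filter.Tendsto (fun k : ℕ => ρ₀ ^ k) Filter.atTop (𝓝 0) :=
      tendsto_pow_atTop_nhds_zero_of_lt_one hpos0.le hlt0
    have h2 : Filter.Tendsto (fun k : ℕ => ρ₀ ^ k • x) Filter.atTop (𝓝 (0:EuclideanSpace ℝ (Fin n))) := by
      simpa using h1.smul_const x
    exact (hf.tendsto 0).comp h2
  have hle : f x ≤ f 0 := ge_of_tendsto hlim0 (Filter.Eventually.of_forall iter_lo)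
  -- other direction
  set σ := ρ₁⁻¹ with hσdef
  have hσpos : (0:ℝ) < σ := inv_pos.mpr hpos1
  have hσlt : σ < 1 := inv_lt_one_of_one_lt₀ hgt1
  have hstep : f (σ • x) ≤ f x := by
    have := (hsi x (ρ₁ • x) σ hσpos).mp hle1
    simpa [smul_smul, hσdef, inv_mul_cancel₀ (ne_of_gt hpos1)] using this
  have iter_hi : ∀ k : ℕ, f (σ ^ k • x) ≤ f x := by
    intro k
    induction k with
    | zero => simp
    | succ k ih =>
      have hk : (0:ℝ) < σ ^ k := pow_pos hσpos k
      calc f (σ ^ (k+1) • x) = f (σ ^ k • σ • x) := by rw [smul_smul, ← pow_succ]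
        _ ≤ f (σ ^ k • x) := (hsi (σ • x) x (σ ^ k) hk).mp hstep
        _ ≤ f x := ih
  have hlim1 : Filter.Tendsto (fun k : ℕ => f (σ ^ k • x)) Filter.atTop (𝓝 (f 0)) := by
    have h1 : Filter.Tendsto (fun k : ℕ => σ ^ k) Filter.atTop (𝓝 0) :=
      tendsto_pow_atTop_nhds_zero_of_lt_one hσpos.le hσlt
    have h2 : Filter.Tendsto (fun k : ℕ => σ ^ k • x) Filter.atTop (𝓝 (0:EuclideanSpace ℝ (Fin n))) := by
      simpa using h1.smul_const x
    exact (hf.tendsto 0).comp h2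
  have hge : f 0 ≤ f x := le_of_tendsto hlim1 (Filter.Eventually.of_forall iter_hi)
  linarith

/-- For a continuous scaling-invariant function `f` w.r.t. `0` with
`f 0 = 0`: if `f` has a local optimum at `x`, then `f (t • x) = f 0` for all `t ≥ 0`;
in particular if `f` attains a global minimum (resp. maximum), then `0` is a global
argmin (resp. argmax). -/
theorem stmt_2 {n : ℕ} (f : EuclideanSpace ℝ (Fin n) → ℝ)
    (hf : Continuous f)
    (hsi : ∀ (x y : EuclideanSpace ℝ (Fin n)) (ρ : ℝ), 0 < ρ →
      (f x ≤ f y ↔ f (ρ • x) ≤ f (ρ • y)))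
    (h0 : f 0 = 0) :
    (∀ x : EuclideanSpace ℝ (Fin n), (IsLocalMin f x ∨ IsLocalMax f x) →
      ∀ t : ℝ, 0 ≤ t → f (t • x) = f 0) ∧
    ((∃ x : EuclideanSpace ℝ (Fin n), ∀ y, f x ≤ f y) →
      ∀ y : EuclideanSpace ℝ (Fin n), f 0 ≤ f y) ∧
    ((∃ x : EuclideanSpace ℝ (Fin n), ∀ y, f y ≤ f x) →
      ∀ y : EuclideanSpace ℝ (Fin n), f y ≤ f 0) := by
  have hsineg : ∀ (x y : EuclideanSpace ℝ (Fin n)) (ρ : ℝ), 0 < ρ →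
      ((-f) x ≤ (-f) y ↔ (-f) (ρ • x) ≤ (-f) (ρ • y)) := by
    intro x y ρ hρ
    simp only [Pi.neg_apply, neg_le_neg_iff]
    exact hsi y x ρ hρ
  have key : ∀ x : EuclideanSpace ℝ (Fin n), (IsLocalMin f x ∨ IsLocalMax f x) → f x = f 0 := by
    intro x hx
    rcases hx with hx | hx
    · exact stmt_2_aux_min f hf hsi hx
    · have := stmt_2_aux_min (-f) hf.neg hsineg hx.neg
      simpa using this
  refine ⟨?_, ?_, ?_⟩
  · intro x hx t ht
    have hx0 := key x hx
    rcases eq_or_lt_of_le ht with rfl | ht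
    · simp
    · have h1 : f (t • x) ≤ f (t • (0:EuclideanSpace ℝ (Fin n))) := (hsi x 0 t ht).mp hx0.le
      have h2 : f (t • (0:EuclideanSpace ℝ (Fin n))) ≤ f (t • x) := (hsi 0 x t ht).mp hx0.ge
      rw [smul_zero] at h1 h2
      linarith
  · rintro ⟨x, hx⟩ y
    have hloc : IsLocalMin f x := Filter.Eventually.of_forall hx
    have := key x (Or.inl hloc)
    linarith [hx y]
  · rintro ⟨x, hx⟩ y
    have hloc : IsLocalMax f x := Filter.Eventually.of_forall hx
    have := key x (Or.inr hloc)
    linarith [hx y]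
end

section
/- Let φ : [0,∞) → ℝ be a scaling-invariant function that is continuous at 0 and strictly monotonic on some nontrivial interval I ⊆ [0,∞) (an interval containing more than one point). Then φ is strictly monotonic on all of [0,∞). -/
private lemma stmt_3_aux (φ : ℝ → ℝ)
    (hsi : ∀ s t : ℝ, 0 ≤ s → 0 ≤ t → ∀ ρ : ℝ, 0 < ρ →
      (φ s ≤ φ t ↔ φ (ρ * s) ≤ φ (ρ * t)))
    (hcont0 : ContinuousWithinAt φ (Set.Ici 0) 0)
    (a b : ℝ) (ha : 0 ≤ a) (hab : a < b) (hfab : φ a < φ b) :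
    StrictMonoOn φ (Set.Ici 0) := by
  have hb : 0 < b := lt_of_le_of_lt ha hab
  -- strict version of scaling invariance
  have hslt : ∀ s t : ℝ, 0 ≤ s → 0 ≤ t → ∀ ρ : ℝ, 0 < ρ →
      (φ s < φ t ↔ φ (ρ * s) < φ (ρ * t)) := by
    intro s t hs ht ρ hρ
    have h := hsi t s ht hs ρ hρ
    constructor
    · intro hlt; by_contra h'; exact absurd (h.2 (not_lt.1 h')) (not_le.2 hlt)
    · intro hlt; by_contra h'; exact absurd (h.1 (not_lt.1 h')) (not_le.2 hlt)
  -- limit of φ (r^(n+1)) is φ 0 for 0 ≤ r < 1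
  have hlim : ∀ r : ℝ, 0 ≤ r → r < 1 →
      Filter.Tendsto (fun n : ℕ => φ (r ^ (n+1))) Filter.atTop (nhds (φ 0)) := by
    intro r hr hr1
    have h1 : Filter.Tendsto (fun n : ℕ => r ^ (n+1)) Filter.atTop (nhds 0) :=
      (tendsto_pow_atTop_nhds_zero_of_lt_one hr hr1).comp
        (Filter.tendsto_add_atTop_nat 1)
    have h2 : Filter.Tendsto (fun n : ℕ => r ^ (n+1)) Filter.atTop
        (nhdsWithin 0 (Set.Ici 0)) := by
      refine tendsto_nhdsWithin_of_tendsto_nhds_of_eventually_within _ h1 ?_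
      exact Filter.Eventually.of_forall fun n => pow_nonneg hr _
    exact hcont0.tendsto.comp h2
  -- (i): if 0 < r < 1 and φ 1 ≤ φ r then φ 1 ≤ φ 0
  have hi : ∀ r : ℝ, 0 < r → r < 1 → φ 1 ≤ φ r → φ 1 ≤ φ 0 := by
    intro r hr hr1 hle
    have hchain : ∀ n : ℕ, φ 1 ≤ φ (r ^ (n+1)) := by
      intro n
      induction n with
      | zero => simpa using hle
      | succ n ih =>
        have := (hsi 1 r zero_le_one hr.le (r ^ (n+1)) (pow_pos hr _)).1 hle
        rw [mul_one, ← pow_succ] at this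
        exact ih.trans this
    exact le_of_tendsto_of_tendsto' tendsto_const_nhds (hlim r hr.le hr1) hchain
  -- (ii): if 0 < r < 1 and φ r ≤ φ 1 then φ 0 ≤ φ r
  have hii : ∀ r : ℝ, 0 < r → r < 1 → φ r ≤ φ 1 → φ 0 ≤ φ r := by
    intro r hr hr1 hle
    have hchain : ∀ n : ℕ, φ (r ^ (n+1)) ≤ φ r := by
      intro n
      induction n with
      | zero => simp
      | succ n ih =>
        have := (hsi r 1 hr.le zero_le_one (r ^ (n+1)) (pow_pos hr _)).1 hle
        rw [mul_one, ← pow_succ] at this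
        exact this.trans ih
    exact le_of_tendsto_of_tendsto' (hlim r hr.le hr1) tendsto_const_nhds hchain
  -- φ 0 < φ 1
  have h01 : φ 0 < φ 1 := by
    have hrb : a / b < 1 := (div_lt_one hb).2 hab
    have hrnn : 0 ≤ a / b := div_nonneg ha hb.le
    have hfr : φ (a / b) < φ 1 := by
      refine (hslt (a/b) 1 hrnn zero_le_one b hb).2 ?_
      have heq1 : b * (a / b) = a := by field_simp
      rw [heq1, mul_one]; exact hfab
    rcases ha.eq_or_lt with h0 | h0
    · rw [← h0] at hfr; simpa using hfr
    · exact (hii _ (div_pos h0 hb) hrb hfr.le).trans_lt hfr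
  -- conclude
  intro s hs t ht hst
  have ht' : 0 < t := lt_of_le_of_lt hs hst
  have hr1 : s / t < 1 := (div_lt_one ht').2 hst
  have hrnn : 0 ≤ s / t := div_nonneg hs ht'.le
  have key : φ (s / t) < φ 1 := by
    rcases hrnn.eq_or_lt with h0 | h0
    · rw [← h0]; exact h01
    · by_contra hc
      exact absurd (hi _ h0 hr1 (not_lt.1 hc)) (not_le.2 h01)
  have hmain := (hslt (s/t) 1 hrnn zero_le_one t ht').1 key
  rw [mul_one] at hmain
  have heq : t * (s / t) = s := by field_simp
  rwa [heq] at hmain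

/-- A scaling-invariant `φ : [0,∞) → ℝ`, continuous at `0` (within
`[0,∞)`) and strictly monotonic on some nontrivial interval `I ⊆ [0,∞)`, is strictly
monotonic on all of `[0,∞)`. -/
theorem stmt_3 (φ : ℝ → ℝ)
    (hsi : ∀ s t : ℝ, 0 ≤ s → 0 ≤ t → ∀ ρ : ℝ, 0 < ρ →
      (φ s ≤ φ t ↔ φ (ρ * s) ≤ φ (ρ * t)))
    (hcont0 : ContinuousWithinAt φ (Set.Ici 0) 0)
    (I : Set ℝ) (hI : I ⊆ Set.Ici 0) (hIint : I.OrdConnected)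
    (hInt : I.Nontrivial)
    (hmono : StrictMonoOn φ I ∨ StrictAntiOn φ I) :
    StrictMonoOn φ (Set.Ici 0) ∨ StrictAntiOn φ (Set.Ici 0) := by
  obtain ⟨x, hx, y, hy, hxy⟩ := hInt
  rcases hxy.lt_or_gt with hlt | hlt
  case _ =>
    rcases hmono with hm | hm
    · exact Or.inl (stmt_3_aux φ hsi hcont0 x y (hI hx) hlt (hm hx hy hlt))
    · refine Or.inr ?_
      have := stmt_3_aux (fun z => -φ z)
        (fun s t hs ht ρ hρ => by simpa using hsi t s ht hs ρ hρ)
        hcont0.neg x y (hI hx) hlt (by simpa using hm hx hy hlt)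
      intro u hu v hv huv
      simpa using this hu hv huv
  case _ =>
    rcases hmono with hm | hm
    · exact Or.inl (stmt_3_aux φ hsi hcont0 y x (hI hy) hlt (hm hy hx hlt))
    · refine Or.inr ?_
      have := stmt_3_aux (fun z => -φ z)
        (fun s t hs ht ρ hρ => by simpa using hsi t s ht hs ρ hρ)
        hcont0.neg y x (hI hy) hlt (by simpa using hm hy hx hlt)
      intro u hu v hv huv
      simpa using this hu hv huv
end

section
/- Let f : ℝⁿ → ℝ be a scaling-invariant function with respect to 0 with f(0) = 0 that is continuous at 0. Assume that for every x ∈ ℝⁿ there exists a nontrivial interval I ⊆ [0,∞) on which the function f_x : t ↦ f(tx) is either strictly monotonic or constant. Then for every x ∈ ℝⁿ, f_x is either constant equal to 0 on [0,∞) or strictly monotonic on [0,∞). -/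
open Filter Topology

/-- Strict version of scaling invariance. -/
private lemma si_lt {g : ℝ → ℝ}
    (hscale : ∀ s t ρ : ℝ, 0 < ρ → (g s ≤ g t ↔ g (ρ*s) ≤ g (ρ*t))) :
    ∀ s t ρ : ℝ, 0 < ρ → (g s < g t ↔ g (ρ*s) < g (ρ*t)) := by
  intro s t ρ hρ
  exact lt_iff_lt_of_le_iff_le (hscale t s ρ hρ)

/-- Equality version of scaling invariance. -/
private lemma si_eq {g : ℝ → ℝ}
    (hscale : ∀ s t ρ : ℝ, 0 < ρ → (g s ≤ g t ↔ g (ρ*s) ≤ g (ρ*t))) :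
    ∀ s t ρ : ℝ, 0 < ρ → (g s = g t ↔ g (ρ*s) = g (ρ*t)) := by
  intro s t ρ hρ
  constructor
  · intro h
    exact le_antisymm ((hscale s t ρ hρ).1 h.le) ((hscale t s ρ hρ).1 h.ge)
  · intro h
    exact le_antisymm ((hscale s t ρ hρ).2 h.le) ((hscale t s ρ hρ).2 h.ge)

private lemma aux_mono_s4 {g : ℝ → ℝ}
    (hscale : ∀ s t ρ : ℝ, 0 < ρ → (g s ≤ g t ↔ g (ρ*s) ≤ g (ρ*t)))
    (h0 : g 0 = 0) (hcont : ContinuousAt g 0)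
    {a b : ℝ} (ha : 0 < a) (hab : a < b)
    (hm : ∀ u v : ℝ, a ≤ u → u < v → v ≤ b → g u < g v) :
    StrictMonoOn g (Set.Ici 0) := by
  have hlt := si_lt hscale
  set r0 : ℝ := b / a with hr0def
  have hr0 : 1 < r0 := (one_lt_div ha).2 hab
  -- step 1
  have step1 : ∀ r : ℝ, 1 < r → r ≤ r0 → g 1 < g r := by
    intro r h1 h2
    have har : a * r ≤ b := by
      rw [mul_comm]
      exact (le_div_iff₀ ha).1 h2
    have h3 : g a < g (a * r) := hm a (a * r) le_rfl (by nlinarith) har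
    have h4 := (hlt a (a * r) a⁻¹ (inv_pos.2 ha)).1 h3
    rwa [inv_mul_cancel₀ ha.ne', inv_mul_cancel_left₀ ha.ne'] at h4
  -- step 2
  have step2 : ∀ r : ℝ, 1 < r → g 1 < g r := by
    have key : ∀ k : ℕ, ∀ r : ℝ, 1 < r → r ≤ r0 ^ k → g 1 < g r := by
      intro k
      induction k with
      | zero => intro r h1 h2; simp at h2; linarith
      | succ k ih =>
        intro r h1 h2
        by_cases hc : r ≤ r0
        · exact step1 r h1 hc
        · push_neg at hc
          have h1' : 1 < r / r0 := (one_lt_div (by linarith)).2 hc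
          have h2' : r / r0 ≤ r0 ^ k := by
            rw [div_le_iff₀ (by linarith)]
            calc r ≤ r0 ^ (k+1) := h2
              _ = r0 ^ k * r0 := pow_succ r0 k
          have h3 := ih (r / r0) h1' h2'
          have h4 := (hlt 1 (r / r0) r0 (by linarith)).1 h3
          have h5 : r0 * (r / r0) = r := by field_simp
          rw [mul_one, h5] at h4
          exact (step1 r0 hr0 le_rfl).trans h4
    intro r hr
    obtain ⟨k, hk⟩ := pow_unbounded_of_one_lt r hr0
    exact key k r hr hk.le
  -- step 3
  have step3 : ∀ s t : ℝ, 0 < s → s < t → g s < g t := by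
    intro s t hs hst
    have h2 := step2 _ ((one_lt_div hs).2 hst)
    have h3 := (hlt 1 (t / s) s hs).1 h2
    have h4 : s * (t / s) = t := by field_simp
    rwa [mul_one, h4] at h3
  -- step 4
  have step4 : ∀ t : ℝ, 0 < t → 0 < g t := by
    intro t ht
    set A : ℕ → ℝ := fun k => g (t / 2 ^ k) with hA
    have hanti : StrictAnti A := by
      apply strictAnti_nat_of_succ_lt
      intro k
      apply step3
      · positivity
      · rw [div_lt_div_iff₀ (by positivity) (by positivity)]
        rw [pow_succ]
        nlinarith [pow_pos (by norm_num : (0:ℝ) < 2) k]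
    have htend : Tendsto A atTop (𝓝 0) := by
      have h1 : Tendsto (fun k : ℕ => t / 2 ^ k) atTop (𝓝 0) := by
        simp only [div_eq_mul_inv, ← inv_pow]
        have := tendsto_pow_atTop_nhds_zero_of_lt_one
          (by norm_num : (0:ℝ) ≤ 2⁻¹) (by norm_num : (2:ℝ)⁻¹ < 1)
        simpa using this.const_mul t
      have := hcont.tendsto.comp h1
      rwa [h0] at this
    have h2 : (0:ℝ) ≤ A 1 := by
      apply le_of_tendsto htend
      filter_upwards [eventually_ge_atTop 2] with k hk
      exact (hanti (by omega : (1:ℕ) < k)).le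
    have h3 : A 1 < A 0 := hanti (by norm_num)
    have h4 : A 0 = g t := by simp [hA]
    rw [h4] at h3
    exact h2.trans_lt h3
  -- conclude
  intro s hs t _ hst
  rcases ((Set.mem_Ici.1 hs).eq_or_lt) with h | h
  · rw [← h, h0]
    exact step4 t (by rw [← h] at hst; exact hst)
  · exact step3 s t h hst

private lemma aux_const {g : ℝ → ℝ}
    (hscale : ∀ s t ρ : ℝ, 0 < ρ → (g s ≤ g t ↔ g (ρ*s) ≤ g (ρ*t)))
    (h0 : g 0 = 0) (hcont : ContinuousAt g 0)
    {a b : ℝ} (ha : 0 < a) (hab : a < b)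
    (hc : ∀ u : ℝ, a ≤ u → u ≤ b → g u = g a) :
    ∀ t : ℝ, 0 ≤ t → g t = 0 := by
  have heq := si_eq hscale
  set r0 : ℝ := b / a with hr0def
  have hr0 : 1 < r0 := (one_lt_div ha).2 hab
  have step1 : ∀ r : ℝ, 1 ≤ r → r ≤ r0 → g 1 = g r := by
    intro r h1 h2
    have har : a * r ≤ b := by
      rw [mul_comm]; exact (le_div_iff₀ ha).1 h2
    have h3 : g a = g (a * r) := (hc (a * r) (by nlinarith) har).symm
    have h4 := (heq a (a * r) a⁻¹ (inv_pos.2 ha)).1 h3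
    rwa [inv_mul_cancel₀ ha.ne', inv_mul_cancel_left₀ ha.ne'] at h4
  have step2 : ∀ r : ℝ, 1 ≤ r → g 1 = g r := by
    have key : ∀ k : ℕ, ∀ r : ℝ, 1 ≤ r → r ≤ r0 ^ k → g 1 = g r := by
      intro k
      induction k with
      | zero => intro r h1 h2; simp at h2; have : r = 1 := le_antisymm h2 h1; rw [this]
      | succ k ih =>
        intro r h1 h2
        by_cases hcc : r ≤ r0
        · exact step1 r h1 hcc
        · push_neg at hcc
          have h1' : 1 ≤ r / r0 := (one_le_div (by linarith)).2 hcc.le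
          have h2' : r / r0 ≤ r0 ^ k := by
            rw [div_le_iff₀ (by linarith)]
            calc r ≤ r0 ^ (k+1) := h2
              _ = r0 ^ k * r0 := pow_succ r0 k
          have h3 := ih (r / r0) h1' h2'
          have h4 := (heq 1 (r / r0) r0 (by linarith)).1 h3
          have h5 : r0 * (r / r0) = r := by field_simp
          rw [mul_one, h5] at h4
          exact (step1 r0 hr0.le le_rfl).trans h4
    intro r hr
    obtain ⟨k, hk⟩ := pow_unbounded_of_one_lt r hr0
    exact key k r hr hk.le
  have step3 : ∀ t : ℝ, 0 < t → g t = g 1 := by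
    intro t ht
    rcases le_or_gt 1 t with h | h
    · have h2 := step2 t h
      exact h2.symm
    · have h2 := step2 (1 / t) (by rw [le_div_iff₀ ht]; linarith)
      have h4 := (heq 1 (1 / t) t ht).1 h2
      have h5 : t * (1 / t) = 1 := by field_simp
      rw [mul_one, h5] at h4
      exact h4
  -- continuity forces g 1 = 0
  have hg1 : g 1 = 0 := by
    have h1 : Tendsto (fun k : ℕ => (1:ℝ) / (k + 1)) atTop (𝓝 0) :=
      tendsto_one_div_add_atTop_nhds_zero_nat
    have h2 : Tendsto (fun k : ℕ => g (1 / (k + 1))) atTop (𝓝 0) := by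
      have := hcont.tendsto.comp h1
      rwa [h0] at this
    have h3 : (fun k : ℕ => g (1 / ((k:ℝ) + 1))) = fun _ => g 1 := by
      funext k
      exact step3 _ (by positivity)
    rw [h3] at h2
    exact tendsto_nhds_unique tendsto_const_nhds h2
  intro t ht
  rcases ht.eq_or_lt with h | h
  · rw [← h]; exact h0
  · rw [step3 t h, hg1]

/-- Let `f` be scaling-invariant w.r.t. `0`, `f 0 = 0`, continuous
at `0`. If for every `x` the function `t ↦ f (t • x)` is strictly monotonic or
constant on some nontrivial interval `I ⊆ [0,∞)`, then every such restriction is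
either constant equal to `0` on `[0,∞)` or strictly monotonic on `[0,∞)`. -/
theorem stmt_4 {n : ℕ} (f : EuclideanSpace ℝ (Fin n) → ℝ)
    (hsi : ∀ (x y : EuclideanSpace ℝ (Fin n)) (ρ : ℝ), 0 < ρ →
      (f x ≤ f y ↔ f (ρ • x) ≤ f (ρ • y)))
    (h0 : f 0 = 0)
    (hcont0 : ContinuousAt f 0)
    (hx : ∀ x : EuclideanSpace ℝ (Fin n), ∃ I : Set ℝ,
      I ⊆ Set.Ici 0 ∧ I.OrdConnected ∧ I.Nontrivial ∧
      (StrictMonoOn (fun t : ℝ => f (t • x)) I ∨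
       StrictAntiOn (fun t : ℝ => f (t • x)) I ∨
       (∃ c : ℝ, ∀ t ∈ I, f (t • x) = c))) :
    ∀ x : EuclideanSpace ℝ (Fin n),
      (∀ t : ℝ, 0 ≤ t → f (t • x) = 0) ∨
      StrictMonoOn (fun t : ℝ => f (t • x)) (Set.Ici 0) ∨
      StrictAntiOn (fun t : ℝ => f (t • x)) (Set.Ici 0) := by
  intro x
  set g : ℝ → ℝ := fun t => f (t • x) with hg
  have hscale : ∀ s t ρ : ℝ, 0 < ρ → (g s ≤ g t ↔ g (ρ*s) ≤ g (ρ*t)) := by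
    intro s t ρ hρ
    have := hsi (s • x) (t • x) ρ hρ
    simpa [hg, smul_smul] using this
  have hg0 : g 0 = 0 := by simp [hg, h0]
  have hgcont : ContinuousAt g 0 := by
    have hsm : Filter.Tendsto (fun t : ℝ => t • x) (nhds 0) (nhds 0) := by
      have hc : Continuous (fun t : ℝ => t • x) := continuous_id.smul continuous_const
      have h := hc.tendsto (0:ℝ)
      rwa [zero_smul] at h
    have h2 : Filter.Tendsto g (nhds 0) (nhds (f 0)) := hcont0.tendsto.comp hsm
    have h3 : g 0 = f 0 := by simp [hg]
    unfold ContinuousAt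
    rw [h3]
    exact h2
  obtain ⟨I, hIsub, hIconn, hInt, hcase⟩ := hx x
  obtain ⟨p, hp, q, hq, hpq⟩ : ∃ p ∈ I, ∃ q ∈ I, p < q := by
    obtain ⟨p, hp, q, hq, hpq⟩ := hInt
    rcases hpq.lt_or_gt with h | h
    exacts [⟨p, hp, q, hq, h⟩, ⟨q, hq, p, hp, h⟩]
  have hp0 : (0:ℝ) ≤ p := hIsub hp
  have hq0 : (0:ℝ) < q := hp0.trans_lt hpq
  set a : ℝ := max p (q/2) with hadef
  have ha0 : 0 < a := lt_max_of_lt_right (by linarith)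
  have haq : a < q := max_lt hpq (by linarith)
  have hpa : p ≤ a := le_max_left _ _
  have hmem : ∀ u : ℝ, a ≤ u → u ≤ q → u ∈ I := fun u h1 h2 =>
    hIconn.out hp hq ⟨hpa.trans h1, h2⟩
  rcases hcase with hm | han | ⟨c, hcst⟩
  · refine Or.inr (Or.inl ?_)
    exact aux_mono_s4 hscale hg0 hgcont ha0 haq
      (fun u v h1 h2 h3 => hm (hmem u h1 (h2.le.trans h3)) (hmem v (h1.trans h2.le) h3) h2)
  · refine Or.inr (Or.inr ?_)
    have hscale' : ∀ s t ρ : ℝ, 0 < ρ → ((-g s) ≤ (-g t) ↔ (-g (ρ*s)) ≤ (-g (ρ*t))) := by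
      intro s t ρ hρ
      rw [neg_le_neg_iff, neg_le_neg_iff]
      exact hscale t s ρ hρ
    have hmono : StrictMonoOn (fun t : ℝ => -g t) (Set.Ici 0) :=
      aux_mono_s4 hscale' (by simp [hg0]) (hgcont.neg) ha0 haq
        (fun u v h1 h2 h3 => by
          have := han (hmem u h1 (h2.le.trans h3)) (hmem v (h1.trans h2.le) h3) h2
          simpa using this)
    intro s hs t ht hst
    have := hmono hs ht hst
    simpa using this
  · refine Or.inl ?_
    exact aux_const hscale hg0 hgcont ha0 haq
      (fun u h1 h2 => by rw [hcst u (hmem u h1 h2), hcst a (hmem a le_rfl haq.le)])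
end

section
/- There exists a scaling-invariant function φ : [0,∞) → ℝ such that φ is not monotonic on any nontrivial interval contained in [0,∞) and φ is not continuous on any nontrivial interval contained in [0,∞). -/
open Real Set

lemma exists_weird : ∃ L : ℝ → ℝ,
    (∀ x y, L (x + y) = L x + L y) ∧
    (∀ (q : ℚ) (x : ℝ), L ((q : ℝ) * x) = q * L x) ∧
    (∃ u : ℝ, L u = 1) ∧ (∃ v : ℝ, v ≠ 0 ∧ L v = 0) := by
  set b := Module.Basis.ofVectorSpace ℚ ℝ with hb
  have hne : Nonempty (Module.Basis.ofVectorSpaceIndex ℚ ℝ) := b.index_nonempty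
  obtain ⟨i⟩ := hne
  have : ∃ j : Module.Basis.ofVectorSpaceIndex ℚ ℝ, j ≠ i := by
    by_contra h
    push_neg at h
    have hsurj : ∀ x : ℝ, ∃ q : ℚ, (q : ℝ) • (b i) = x := by
      intro x
      have hx : x ∈ Submodule.span ℚ (Set.range b) := by
        rw [b.span_eq]; trivial
      have hrange : Set.range b ⊆ {(b i : ℝ)} := by
        rintro _ ⟨k, rfl⟩; rw [h k]; rfl
      have hx2 : x ∈ Submodule.span ℚ {(b i : ℝ)} :=
        Submodule.span_mono hrange hx
      rw [Submodule.mem_span_singleton] at hx2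
      obtain ⟨q, hq⟩ := hx2
      exact ⟨q, by rw [← hq]; simp [Rat.smul_def]⟩
    have : (Set.univ : Set ℝ).Countable := by
      have : (Set.univ : Set ℝ) ⊆ Set.range (fun q : ℚ => (q : ℝ) • (b i)) := by
        intro x _
        obtain ⟨q, hq⟩ := hsurj x
        exact ⟨q, hq⟩
      exact (Set.countable_range _).mono this
    exact Cardinal.not_countable_real this
  obtain ⟨j, hj⟩ := this
  refine ⟨fun x => ((b.coord i x : ℚ) : ℝ), ?_, ?_, ⟨b i, ?_⟩, ⟨b j, ?_, ?_⟩⟩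
  · intro x y; push_cast [map_add]; ring
  · intro q x
    have : (q : ℝ) * x = q • x := by simp [Rat.smul_def]
    simp only [this]
    rw [LinearMap.map_smul]
    push_cast [Rat.smul_def]; ring
  · simp [Module.Basis.coord_apply, Module.Basis.repr_self]
  · have := b.ne_zero j
    simpa using this
  · simp [Module.Basis.coord_apply, Module.Basis.repr_self, Finsupp.single_apply, hj]

lemma dense_step (L : ℝ → ℝ)
    (hadd : ∀ x y, L (x + y) = L x + L y)
    (hq : ∀ (q : ℚ) (x : ℝ), L ((q : ℝ) * x) = q * L x)
    (u : ℝ) (hu : L u = 1) (v : ℝ) (hv0 : v ≠ 0) (hv : L v = 0)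
    {α β c d : ℝ} (hαβ : α < β) (hcd : c < d) :
    ∃ x, α < x ∧ x < β ∧ c < L x ∧ L x < d := by
  wlog hvpos : 0 < v generalizing v
  · refine this (-v) (by simpa using hv0) ?_
      (by push_neg at hvpos; rcases hv0.lt_or_gt with h|h <;> linarith)
    have h1 : (-v : ℝ) = ((-1 : ℚ) : ℝ) * v := by push_cast; ring
    rw [h1, hq, hv]; ring
  obtain ⟨q, hq1, hq2⟩ := exists_rat_btwn hcd
  have key : ∀ r : ℚ, L ((q : ℝ) * u + (r : ℝ) * v) = (q : ℝ) := by
    intro r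
    rw [hadd, hq, hq, hu, hv]; ring
  have hdiv : (α - (q:ℝ)*u) / v < (β - (q:ℝ)*u) / v :=
    div_lt_div_of_pos_right (by linarith) hvpos
  obtain ⟨r, hr1, hr2⟩ := exists_rat_btwn hdiv
  refine ⟨(q : ℝ) * u + (r : ℝ) * v, ?_, ?_,
    by rw [key]; exact_mod_cast hq1, by rw [key]; exact_mod_cast hq2⟩
  · have := (div_lt_iff₀ hvpos).mp hr1
    linarith
  · have := (lt_div_iff₀ hvpos).mp hr2
    linarith

/-- There exists a scaling-invariant function `φ : [0,∞) → ℝ` which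
is neither monotonic nor continuous on any nontrivial interval contained in `[0,∞)`. -/
theorem stmt_5 :
    ∃ φ : ℝ → ℝ,
      (∀ s t : ℝ, 0 ≤ s → 0 ≤ t → ∀ ρ : ℝ, 0 < ρ →
        (φ s ≤ φ t ↔ φ (ρ * s) ≤ φ (ρ * t))) ∧
      (∀ I : Set ℝ, I ⊆ Set.Ici 0 → I.OrdConnected → I.Nontrivial →
        ¬ MonotoneOn φ I ∧ ¬ AntitoneOn φ I ∧ ¬ ContinuousOn φ I) := by
  obtain ⟨L, hadd, hq, ⟨u, hu⟩, ⟨v, hv0, hv⟩⟩ := exists_weird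
  set φ : ℝ → ℝ := fun x => if x ≤ 0 then -2 else Real.arctan (L (Real.log x)) with hφ
  have hφpos : ∀ x : ℝ, 0 < x → φ x = Real.arctan (L (Real.log x)) := by
    intro x hx; simp [hφ, not_le.mpr hx]
  have hφ0 : φ 0 = -2 := by simp [hφ]
  have hbound : ∀ y : ℝ, (-2 : ℝ) < Real.arctan y := by
    intro y
    have h1 := Real.neg_pi_div_two_lt_arctan y
    have h2 : Real.pi < 4 := by
      have := Real.pi_lt_d2; linarith
    linarith
  refine ⟨φ, ?_, ?_⟩
  · -- scaling invariance
    intro s t hs ht ρ hρ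
    rcases hs.lt_or_eq with hs | hs
    · rcases ht.lt_or_eq with ht | ht
      · -- both positive
        rw [hφpos s hs, hφpos t ht, hφpos (ρ*s) (by positivity), hφpos (ρ*t) (by positivity)]
        rw [Real.log_mul (ne_of_gt hρ) (ne_of_gt hs), Real.log_mul (ne_of_gt hρ) (ne_of_gt ht),
          hadd, hadd]
        rw [Real.arctan_strictMono.le_iff_le, Real.arctan_strictMono.le_iff_le]
        exact (add_le_add_iff_left _).symm
      · -- s > 0, t = 0
        subst ht
        rw [mul_zero, hφ0, hφpos s hs, hφpos (ρ*s) (by positivity)]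
        exact iff_of_false (not_le.mpr (hbound _)) (not_le.mpr (hbound _))
    · -- s = 0
      subst hs
      rw [mul_zero, hφ0]
      rcases ht.lt_or_eq with ht | ht
      · rw [hφpos t ht, hφpos (ρ*t) (by positivity)]
        exact iff_of_true (le_of_lt (hbound _)) (le_of_lt (hbound _))
      · subst ht; rw [mul_zero]
  · intro I hIci hIoc hInt
    obtain ⟨a, ha, b, hb, hab⟩ := hInt
    set p := min a b with hp
    set s := max a b with hs
    have hps : p < s := by
      rcases hab.lt_or_gt with h | h
      · simp [hp, hs, min_eq_left h.le, max_eq_right h.le, h]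
      · simp [hp, hs, min_eq_right h.le, max_eq_left h.le, h]
    have hpI : p ∈ I := by rcases le_total a b with h | h <;> simp [hp, min_eq_left, min_eq_right, h, ha, hb]
    have hsI : s ∈ I := by rcases le_total a b with h | h <;> simp [hs, max_eq_right, max_eq_left, h, ha, hb]
    have hp0 : 0 ≤ p := le_min (hIci ha) (hIci hb)
    have hs0 : 0 < s := lt_of_le_of_lt hp0 hps
    have hIccI : Set.Icc p s ⊆ I := hIoc.out hpI hsI
    set a0 := max p (s/2) with ha0
    have ha0pos : 0 < a0 := lt_of_lt_of_le (by linarith) (le_max_right _ _)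
    have ha0lt : a0 < s := max_lt hps (by linarith)
    have hsub : Set.Icc a0 s ⊆ I := fun x hx =>
      hIccI ⟨le_trans (le_max_left _ _) hx.1, hx.2⟩
    -- key: in any subinterval of (a0, s), L∘log hits any target interval
    have key : ∀ α β : ℝ, a0 ≤ α → α < β → β ≤ s → ∀ c d : ℝ, c < d →
        ∃ x, α < x ∧ x < β ∧ x ∈ I ∧ φ x = Real.arctan (L (Real.log x)) ∧
          c < L (Real.log x) ∧ L (Real.log x) < d := by
      intro α β hα hαβ hβ c d hcd
      have hαpos : 0 < α := lt_of_lt_of_le ha0pos hα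
      have hlog : Real.log α < Real.log β := Real.log_lt_log hαpos hαβ
      obtain ⟨y, hy1, hy2, hy3, hy4⟩ := dense_step L hadd hq u hu v hv0 hv hlog hcd
      refine ⟨Real.exp y, ?_, ?_, ?_, ?_, ?_, ?_⟩
      · calc α = Real.exp (Real.log α) := (Real.exp_log hαpos).symm
          _ < Real.exp y := Real.exp_lt_exp.mpr hy1
      · calc Real.exp y < Real.exp (Real.log β) := Real.exp_lt_exp.mpr hy2
          _ = β := Real.exp_log (hαpos.trans hαβ)
      · apply hsub
        constructor
        · have : α < Real.exp y := by
            calc α = Real.exp (Real.log α) := (Real.exp_log hαpos).symm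
              _ < Real.exp y := Real.exp_lt_exp.mpr hy1
          linarith
        · have : Real.exp y < β := by
            calc Real.exp y < Real.exp (Real.log β) := Real.exp_lt_exp.mpr hy2
              _ = β := Real.exp_log (hαpos.trans hαβ)
          linarith
      · exact hφpos _ (Real.exp_pos y)
      · rwa [Real.log_exp]
      · rwa [Real.log_exp]
    set m := (a0 + s) / 2 with hm
    have hm1 : a0 < m := by simp [hm]; linarith
    have hm2 : m < s := by simp [hm]; linarith
    have hmI : m ∈ I := hsub ⟨hm1.le, hm2.le⟩
    refine ⟨?_, ?_, ?_⟩
    · -- not monotone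
      intro hmono
      obtain ⟨x₁, hx11, hx12, hx13, hx14, hx15, hx16⟩ :=
        key a0 m le_rfl hm1 hm2.le 0 1 one_pos
      obtain ⟨x₂, hx21, hx22, hx23, hx24, hx25, hx26⟩ :=
        key m s hm1.le hm2 le_rfl (-1) 0 (by norm_num)
      have hle : x₁ ≤ x₂ := by linarith
      have := hmono hx13 hx23 hle
      rw [hx14, hx24] at this
      have h1 : Real.arctan (L (Real.log x₂)) < Real.arctan (L (Real.log x₁)) :=
        Real.arctan_strictMono (by linarith)
      linarith
    · -- not antitone
      intro hanti
      obtain ⟨x₁, hx11, hx12, hx13, hx14, hx15, hx16⟩ :=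
        key a0 m le_rfl hm1 hm2.le (-1) 0 (by norm_num)
      obtain ⟨x₂, hx21, hx22, hx23, hx24, hx25, hx26⟩ :=
        key m s hm1.le hm2 le_rfl 0 1 one_pos
      have hle : x₁ ≤ x₂ := by linarith
      have := hanti hx13 hx23 hle
      rw [hx14, hx24] at this
      have h1 : Real.arctan (L (Real.log x₁)) < Real.arctan (L (Real.log x₂)) :=
        Real.arctan_strictMono (by linarith)
      linarith
    · -- not continuous
      intro hcont
      have hcw : ContinuousWithinAt φ I m := hcont m hmI
      have harc1 : (0:ℝ) < Real.arctan 1 := by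
        rw [← Real.arctan_zero]; exact Real.arctan_strictMono one_pos
      rw [Metric.continuousWithinAt_iff] at hcw
      obtain ⟨δ, hδ, hball⟩ := hcw (Real.arctan 1 / 2) (by linarith)
      set α1 := max a0 (m - δ) with hα1
      have hα1lt : α1 < m := max_lt hm1 (by linarith)
      obtain ⟨x₁, hx11, hx12, hx13, hx14, hx15, hx16⟩ :=
        key α1 m (le_max_left _ _) hα1lt hm2.le 1 2 one_lt_two
      set β2 := min s (m + δ) with hβ2
      have hβ2gt : m < β2 := lt_min hm2 (by linarith)
      obtain ⟨x₂, hx21, hx22, hx23, hx24, hx25, hx26⟩ :=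
        key m β2 hm1.le hβ2gt (min_le_left _ _) (-2) (-1) (by norm_num)
      have hd1 : dist x₁ m < δ := by
        rw [Real.dist_eq, abs_lt]
        constructor
        · have : m - δ ≤ α1 := le_max_right _ _
          linarith
        · linarith
      have hd2 : dist x₂ m < δ := by
        rw [Real.dist_eq, abs_lt]
        constructor
        · linarith
        · have : β2 ≤ m + δ := min_le_right _ _
          linarith
      have hb1 := hball hx13 hd1
      have hb2 := hball hx23 hd2
      have hv1 : Real.arctan 1 ≤ φ x₁ := by
        rw [hx14]; exact (Real.arctan_strictMono hx15).le
      have hv2 : φ x₂ ≤ Real.arctan (-1) := by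
        rw [hx24]; exact (Real.arctan_strictMono hx26).le
      rw [Real.arctan_neg] at hv2
      have hdist : dist (φ x₁) (φ x₂) < Real.arctan 1 := by
        calc dist (φ x₁) (φ x₂) ≤ dist (φ x₁) (φ m) + dist (φ m) (φ x₂) := dist_triangle _ _ _
          _ < Real.arctan 1 / 2 + Real.arctan 1 / 2 := by
              rw [dist_comm (φ m)]; exact add_lt_add hb1 hb2
          _ = Real.arctan 1 := by ring
      rw [Real.dist_eq] at hdist
      have : φ x₁ - φ x₂ ≤ |φ x₁ - φ x₂| := le_abs_self _
      linarith
end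

section
/- Let f : ℝⁿ → ℝ be a continuous scaling-invariant function with respect to 0, let I ⊆ ℝ be a nontrivial interval, let φ : ℝ → ℝ be continuous and injective on I, and let p : ℝⁿ → ℝ be a positively homogeneous function of some degree α > 0 whose range is contained in I, such that f(x) = φ(p(x)) for all x ∈ ℝⁿ. Then p is continuous on ℝⁿ. -/
private lemma aux_mono_of {I : Set ℝ} (hI : I.OrdConnected) (φ : ℝ → ℝ)
    (hφc : ContinuousOn φ I) (hφi : Set.InjOn φ I)
    {a b : ℝ} (ha : a ∈ I) (hb : b ∈ I) (hab : a < b) (hφab : φ a < φ b) :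
    StrictMonoOn φ I := by
  intro x hx y hy hxy
  have hs : min a x ∈ I := by
    rcases le_total a x with h | h
    · rwa [min_eq_left h]
    · rwa [min_eq_right h]
  have ht : max b y ∈ I := by
    rcases le_total b y with h | h
    · rwa [max_eq_right h]
    · rwa [max_eq_left h]
  have hst : Set.Icc (min a x) (max b y) ⊆ I := hI.out hs ht
  have hs_le_t : min a x ≤ max b y :=
    le_trans (min_le_left a x) (le_trans hab.le (le_max_left b y))
  have haI : a ∈ Set.Icc (min a x) (max b y) :=
    ⟨min_le_left a x, le_trans hab.le (le_max_left b y)⟩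
  have hbI : b ∈ Set.Icc (min a x) (max b y) :=
    ⟨le_trans (min_le_left a x) hab.le, le_max_left b y⟩
  have hxI : x ∈ Set.Icc (min a x) (max b y) :=
    ⟨min_le_right a x, le_trans hxy.le (le_max_right b y)⟩
  have hyI : y ∈ Set.Icc (min a x) (max b y) :=
    ⟨le_trans (min_le_right a x) hxy.le, le_max_right b y⟩
  rcases ContinuousOn.strictMonoOn_of_injOn_Icc' hs_le_t (hφc.mono hst) (hφi.mono hst)
      with hm | hanti
  · exact hm hxI hyI hxy
  · exact absurd (hanti haI hbI hab) (not_lt.mpr hφab.le)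

private lemma aux_mono_or_anti {I : Set ℝ} (hI : I.OrdConnected) (hInt : I.Nontrivial)
    (φ : ℝ → ℝ) (hφc : ContinuousOn φ I) (hφi : Set.InjOn φ I) :
    StrictMonoOn φ I ∨ StrictAntiOn φ I := by
  obtain ⟨a, ha, b, hb, hne⟩ := hInt
  have key : ∀ a b : ℝ, a ∈ I → b ∈ I → a < b → StrictMonoOn φ I ∨ StrictAntiOn φ I := by
    intro a b ha hb hab
    have hφne : φ a ≠ φ b := fun h => hab.ne (hφi ha hb h)
    rcases hφne.lt_or_gt with h | h
    · exact Or.inl (aux_mono_of hI φ hφc hφi ha hb hab h)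
    · right
      have hneg : StrictMonoOn (fun t => -φ t) I :=
        aux_mono_of hI _ hφc.neg (fun u hu v hv huv => hφi hu hv (neg_injective huv))
          ha hb hab (by simpa using h)
      intro x hx y hy hxy
      have := hneg hx hy hxy
      simpa using this
  rcases hne.lt_or_gt with h | h
  · exact key a b ha hb h
  · exact key b a hb ha h

private lemma aux_cont {n : ℕ} (f : EuclideanSpace ℝ (Fin n) → ℝ) (hf : Continuous f)
    (I : Set ℝ) (hIint : I.OrdConnected) (φ : ℝ → ℝ) (hφc : ContinuousOn φ I)
    (hmono : StrictMonoOn φ I) (p : EuclideanSpace ℝ (Fin n) → ℝ)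
    (hrange : Set.range p ⊆ I) (hfp : ∀ x, f x = φ (p x)) : Continuous p := by
  haveI : I.OrdConnected := hIint
  haveI : (φ '' I).OrdConnected := (hIint.isPreconnected.image φ hφc).ordConnected
  let e := StrictMonoOn.orderIso φ I hmono
  have hmem : ∀ x, f x ∈ φ '' I := fun x => by
    rw [hfp]; exact ⟨p x, hrange ⟨x, rfl⟩, rfl⟩
  have key : ∀ x, p x = (e.symm ⟨f x, hmem x⟩ : ℝ) := by
    intro x
    have hpx : p x ∈ I := hrange ⟨x, rfl⟩
    have h1 : e ⟨p x, hpx⟩ = ⟨f x, hmem x⟩ := Subtype.ext (show φ (p x) = f x from (hfp x).symm)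
    rw [← h1, e.symm_apply_apply]
  rw [show p = fun x => (e.symm ⟨f x, hmem x⟩ : ℝ) from funext key]
  exact continuous_subtype_val.comp (e.symm.continuous.comp (hf.subtype_mk hmem))

/-- If a continuous scaling-invariant function `f` w.r.t. `0`
factors as `f = φ ∘ p` with `φ` continuous and injective on a nontrivial interval `I`
containing the range of `p`, and `p` positively homogeneous of degree `α > 0`,
then `p` is continuous. -/
theorem stmt_6 {n : ℕ} (f : EuclideanSpace ℝ (Fin n) → ℝ)
    (hf : Continuous f)
    (hsi : ∀ (x y : EuclideanSpace ℝ (Fin n)) (ρ : ℝ), 0 < ρ →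
      (f x ≤ f y ↔ f (ρ • x) ≤ f (ρ • y)))
    (I : Set ℝ) (hIint : I.OrdConnected) (hInt : I.Nontrivial)
    (φ : ℝ → ℝ) (hφc : ContinuousOn φ I) (hφi : Set.InjOn φ I)
    (p : EuclideanSpace ℝ (Fin n) → ℝ) (α : ℝ) (hα : 0 < α)
    (hph : ∀ (x : EuclideanSpace ℝ (Fin n)) (ρ : ℝ), 0 < ρ →
      p (ρ • x) = ρ ^ α * p x)
    (hrange : Set.range p ⊆ I)
    (hfp : ∀ x, f x = φ (p x)) :
    Continuous p := by
  rcases aux_mono_or_anti hIint hInt φ hφc hφi with hm | ha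
  · exact aux_cont f hf I hIint φ hφc hm p hrange hfp
  · refine aux_cont (fun x => -f x) hf.neg I hIint (fun t => -φ t) hφc.neg
      (fun x hx y hy hxy => by simpa using ha hx hy hxy) p hrange (fun x => by rw [hfp])
end

section
/- Let f : ℝⁿ → ℝ be a scaling-invariant function with respect to 0 with f(0) = 0 such that for every x ∈ ℝⁿ the function f_x : t ↦ f(tx) is continuous on [0,∞) and is either constant on [0,∞) or strictly monotonic on [0,∞). Then for every α > 0 there exist a positively homogeneous function p : ℝⁿ → ℝ of degree α and a function φ : ℝ → ℝ that is strictly increasing and continuous on the range of p, such that f(x) = φ(p(x)) for all x ∈ ℝⁿ. -/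
section Aux

variable {n : ℕ} {f : EuclideanSpace ℝ (Fin n) → ℝ}

private lemma si_lt_s7 (hsi : ∀ (x y : EuclideanSpace ℝ (Fin n)) (ρ : ℝ), 0 < ρ →
      (f x ≤ f y ↔ f (ρ • x) ≤ f (ρ • y)))
    {x y : EuclideanSpace ℝ (Fin n)} {ρ : ℝ} (hρ : 0 < ρ) :
    f x < f y ↔ f (ρ • x) < f (ρ • y) := by
  rw [← not_le, ← not_le, hsi y x ρ hρ]

private lemma si_eq_s7 (hsi : ∀ (x y : EuclideanSpace ℝ (Fin n)) (ρ : ℝ), 0 < ρ →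
      (f x ≤ f y ↔ f (ρ • x) ≤ f (ρ • y)))
    {x y : EuclideanSpace ℝ (Fin n)} {ρ : ℝ} (hρ : 0 < ρ) (h : f x = f y) :
    f (ρ • x) = f (ρ • y) :=
  le_antisymm ((hsi x y ρ hρ).1 h.le) ((hsi y x ρ hρ).1 h.ge)

private lemma si_pos (hsi : ∀ (x y : EuclideanSpace ℝ (Fin n)) (ρ : ℝ), 0 < ρ →
      (f x ≤ f y ↔ f (ρ • x) ≤ f (ρ • y)))
    (h0 : f 0 = 0) {x : EuclideanSpace ℝ (Fin n)} {ρ : ℝ} (hρ : 0 < ρ) :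
    0 < f x ↔ 0 < f (ρ • x) := by
  have := si_lt_s7 hsi (x := 0) (y := x) hρ
  rw [smul_zero, h0] at this
  exact this

private lemma ray_mono (h0 : f 0 = 0)
    (hmono : ∀ x : EuclideanSpace ℝ (Fin n),
      (∃ c : ℝ, ∀ t : ℝ, 0 ≤ t → f (t • x) = c) ∨
      StrictMonoOn (fun t : ℝ => f (t • x)) (Set.Ici 0) ∨
      StrictAntiOn (fun t : ℝ => f (t • x)) (Set.Ici 0))
    {x : EuclideanSpace ℝ (Fin n)} (hx : 0 < f x) :
    StrictMonoOn (fun t : ℝ => f (t • x)) (Set.Ici 0) := by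
  rcases hmono x with ⟨c, hc⟩ | h | h
  · exfalso
    have h1 := hc 1 zero_le_one
    have h2 := hc 0 le_rfl
    rw [one_smul] at h1
    rw [zero_smul, h0] at h2
    rw [h1, ← h2] at hx
    exact lt_irrefl _ hx
  · exact h
  · exfalso
    have := h (Set.self_mem_Ici) (Set.mem_Ici.2 zero_le_one) one_pos
    simp only [one_smul, zero_smul, h0] at this
    exact lt_asymm hx this

private lemma ray_pos (h0 : f 0 = 0)
    (hmono : ∀ x : EuclideanSpace ℝ (Fin n),
      (∃ c : ℝ, ∀ t : ℝ, 0 ≤ t → f (t • x) = c) ∨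
      StrictMonoOn (fun t : ℝ => f (t • x)) (Set.Ici 0) ∨
      StrictAntiOn (fun t : ℝ => f (t • x)) (Set.Ici 0))
    {x : EuclideanSpace ℝ (Fin n)} (hx : 0 < f x) {t : ℝ} (ht : 0 < t) :
    0 < f (t • x) := by
  have := ray_mono h0 hmono hx (Set.self_mem_Ici) (Set.mem_Ici.2 ht.le) ht
  simpa [zero_smul, h0] using this

/-- Existence of a matching point on the reference ray. -/
private lemma exists_match (hsi : ∀ (x y : EuclideanSpace ℝ (Fin n)) (ρ : ℝ), 0 < ρ →
      (f x ≤ f y ↔ f (ρ • x) ≤ f (ρ • y)))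
    (h0 : f 0 = 0)
    (hcont : ∀ x : EuclideanSpace ℝ (Fin n),
      ContinuousOn (fun t : ℝ => f (t • x)) (Set.Ici 0))
    {x y : EuclideanSpace ℝ (Fin n)} (hx : 0 < f x) (hy : 0 < f y) :
    ∃ t : ℝ, 0 < t ∧ f (t • y) = f x := by
  -- find ρ > 0 with f (ρ • x) < f y
  have hc0 : ContinuousWithinAt (fun t : ℝ => f (t • x)) (Set.Ici 0) 0 :=
    hcont x 0 Set.self_mem_Ici
  have h00 : f ((0 : ℝ) • x) = 0 := by rw [zero_smul, h0]
  have hev : ∀ᶠ t in nhdsWithin (0 : ℝ) (Set.Ici 0), f (t • x) < f y := by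
    have := hc0.tendsto (Iio_mem_nhds (by rw [h00]; exact hy))
    exact this
  have hev' : ∀ᶠ t in nhdsWithin (0 : ℝ) (Set.Ioi 0), f (t • x) < f y :=
    hev.filter_mono (nhdsWithin_mono _ Set.Ioi_subset_Ici_self)
  obtain ⟨ρ, hρlt, hρpos⟩ := (hev'.and self_mem_nhdsWithin).exists
  have hρ : (0 : ℝ) < ρ := hρpos
  -- f x < f (ρ⁻¹ • y)
  have hup : f x < f (ρ⁻¹ • y) := by
    have h1 := hsi (ρ⁻¹ • y) x ρ hρ
    rw [smul_smul, mul_inv_cancel₀ hρ.ne', one_smul] at h1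
    rw [← not_le]
    intro hle
    exact absurd (h1.1 hle) (not_le.2 hρlt)
  -- IVT
  have hinv : (0 : ℝ) ≤ ρ⁻¹ := (inv_pos.2 hρ).le
  have hivt := intermediate_value_Icc hinv
    ((hcont y).mono (Set.Icc_subset_Ici_self))
  have hmem : f x ∈ Set.Icc (f ((0:ℝ) • y)) (f (ρ⁻¹ • y)) := by
    constructor
    · rw [zero_smul, h0]; exact hx.le
    · exact hup.le
  obtain ⟨t, htmem, hteq⟩ := hivt hmem
  replace hteq : f (t • y) = f x := hteq
  refine ⟨t, ?_, hteq⟩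
  rcases lt_or_eq_of_le htmem.1 with h | h
  · exact h
  · exfalso
    rw [← h, zero_smul, h0] at hteq
    exact hx.ne hteq

/-- The "positive side machine". -/
private lemma pos_machine (hsi : ∀ (x y : EuclideanSpace ℝ (Fin n)) (ρ : ℝ), 0 < ρ →
      (f x ≤ f y ↔ f (ρ • x) ≤ f (ρ • y)))
    (h0 : f 0 = 0)
    (hcont : ∀ x : EuclideanSpace ℝ (Fin n),
      ContinuousOn (fun t : ℝ => f (t • x)) (Set.Ici 0))
    (hmono : ∀ x : EuclideanSpace ℝ (Fin n),
      (∃ c : ℝ, ∀ t : ℝ, 0 ≤ t → f (t • x) = c) ∨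
      StrictMonoOn (fun t : ℝ => f (t • x)) (Set.Ici 0) ∨
      StrictAntiOn (fun t : ℝ => f (t • x)) (Set.Ici 0))
    {α : ℝ} (hα : 0 < α) :
    ∃ (q : EuclideanSpace ℝ (Fin n) → ℝ) (ψ : ℝ → ℝ),
      (∀ x, ¬ (0 < f x) → q x = 0) ∧
      (∀ x, 0 < f x → 0 < q x) ∧
      (∀ (x : EuclideanSpace ℝ (Fin n)) (ρ : ℝ), 0 < ρ → q (ρ • x) = ρ ^ α * q x) ∧
      StrictMonoOn ψ (Set.Ici 0) ∧
      ContinuousOn ψ (Set.Ici 0) ∧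
      ψ 0 = 0 ∧
      (∀ s : ℝ, 0 < s → 0 < ψ s) ∧
      (∀ x, 0 < f x → ψ (q x) = f x) := by
  by_cases hP : ∃ z, 0 < f z
  · obtain ⟨xp, hxp⟩ := hP
    have exT : ∀ x, 0 < f x → ∃ t : ℝ, 0 < t ∧ f (t • xp) = f x :=
      fun x hx => exists_match hsi h0 hcont hx hxp
    have uniq : ∀ {t₁ t₂ : ℝ}, 0 ≤ t₁ → 0 ≤ t₂ → f (t₁ • xp) = f (t₂ • xp) → t₁ = t₂ :=
      fun {t₁ t₂} h₁ h₂ h =>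
        (ray_mono h0 hmono hxp).injOn (Set.mem_Ici.2 h₁) (Set.mem_Ici.2 h₂) h
    classical
    refine ⟨fun x => if h : 0 < f x then (exT x h).choose ^ α else 0,
      fun s => if 0 < s then f (s ^ α⁻¹ • xp) else 0, ?_, ?_, ?_, ?_, ?_, ?_, ?_, ?_⟩
    · intro x hx; dsimp only; rw [dif_neg hx]
    · intro x hx; dsimp only; rw [dif_pos hx]
      exact Real.rpow_pos_of_pos (exT x hx).choose_spec.1 α
    · intro x ρ hρ
      dsimp only
      by_cases hx : 0 < f x
      · have hρx : 0 < f (ρ • x) := (si_pos hsi h0 hρ).1 hx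
        rw [dif_pos hx, dif_pos hρx]
        set t := (exT x hx).choose with ht
        obtain ⟨htpos, hteq⟩ := (exT x hx).choose_spec
        set t' := (exT (ρ • x) hρx).choose with ht'
        obtain ⟨ht'pos, ht'eq⟩ := (exT (ρ • x) hρx).choose_spec
        have hkey : f ((ρ * t) • xp) = f (ρ • x) := by
          rw [mul_smul]
          exact si_eq_s7 hsi hρ hteq
        have : t' = ρ * t := uniq ht'pos.le (mul_pos hρ htpos).le (ht'eq.trans hkey.symm)
        rw [this, Real.mul_rpow hρ.le htpos.le]
      · have hρx : ¬ 0 < f (ρ • x) := fun h => hx ((si_pos hsi h0 hρ).2 h)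
        rw [dif_neg hx, dif_neg hρx, mul_zero]
    · -- strict mono of ψ on Ici 0
      intro s hs t ht hst
      dsimp only
      have htpos : 0 < t := lt_of_le_of_lt hs hst
      by_cases hspos : 0 < s
      · rw [if_pos hspos, if_pos htpos]
        exact ray_mono h0 hmono hxp
          (Set.mem_Ici.2 (Real.rpow_nonneg hspos.le _))
          (Set.mem_Ici.2 (Real.rpow_nonneg htpos.le _))
          (Real.rpow_lt_rpow hspos.le hst (inv_pos.2 hα))
      · rw [if_neg hspos, if_pos htpos]
        exact ray_pos h0 hmono hxp (Real.rpow_pos_of_pos htpos _)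
    · -- continuity of ψ on Ici 0
      have hcomp : ContinuousOn (fun s : ℝ => f (s ^ α⁻¹ • xp)) (Set.Ici 0) := by
        apply (hcont xp).comp
        · intro s _
          exact (Real.continuousAt_rpow_const s α⁻¹
            (Or.inr (inv_pos.2 hα).le)).continuousWithinAt
        · intro s hs
          exact Set.mem_Ici.2 (Real.rpow_nonneg hs _)
      apply hcomp.congr
      intro s hs
      dsimp only
      rcases lt_or_eq_of_le (Set.mem_Ici.1 hs) with h | h
      · rw [if_pos h]
      · subst h
        rw [if_neg (lt_irrefl (0:ℝ)),
          Real.zero_rpow (inv_ne_zero hα.ne'), zero_smul, h0]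
    · show (if (0:ℝ) < 0 then f ((0:ℝ) ^ α⁻¹ • xp) else 0) = 0
      rw [if_neg (lt_irrefl (0:ℝ))]
    · intro s hs
      dsimp only
      rw [if_pos hs]
      exact ray_pos h0 hmono hxp (Real.rpow_pos_of_pos hs _)
    · intro x hx
      dsimp only
      rw [dif_pos hx]
      obtain ⟨htpos, hteq⟩ := (exT x hx).choose_spec
      rw [if_pos (Real.rpow_pos_of_pos htpos α),
        Real.rpow_rpow_inv htpos.le hα.ne']
      exact hteq
  · refine ⟨fun _ => 0, id, fun _ _ => rfl, ?_, ?_, ?_, ?_, rfl, ?_, ?_⟩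
    · intro x hx; exact absurd ⟨x, hx⟩ hP
    · intro x ρ _; rw [mul_zero]
    · exact strictMonoOn_id
    · exact continuousOn_id
    · intro s hs; exact hs
    · intro x hx; exact absurd ⟨x, hx⟩ hP

end Aux

/-- Let `f` be scaling-invariant w.r.t. `0` with `f 0 = 0` such that
each restriction `t ↦ f (t • x)` is continuous on `[0,∞)` and either constant or
strictly monotonic on `[0,∞)`. Then for every `α > 0` there are a positively
homogeneous function `p` of degree `α` and a function `φ` strictly increasing and
continuous on the range of `p` with `f = φ ∘ p`. -/
theorem stmt_7 {n : ℕ} (f : EuclideanSpace ℝ (Fin n) → ℝ)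
    (hsi : ∀ (x y : EuclideanSpace ℝ (Fin n)) (ρ : ℝ), 0 < ρ →
      (f x ≤ f y ↔ f (ρ • x) ≤ f (ρ • y)))
    (h0 : f 0 = 0)
    (hcont : ∀ x : EuclideanSpace ℝ (Fin n),
      ContinuousOn (fun t : ℝ => f (t • x)) (Set.Ici 0))
    (hmono : ∀ x : EuclideanSpace ℝ (Fin n),
      (∃ c : ℝ, ∀ t : ℝ, 0 ≤ t → f (t • x) = c) ∨
      StrictMonoOn (fun t : ℝ => f (t • x)) (Set.Ici 0) ∨
      StrictAntiOn (fun t : ℝ => f (t • x)) (Set.Ici 0)) :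
    ∀ α : ℝ, 0 < α →
      ∃ (p : EuclideanSpace ℝ (Fin n) → ℝ) (φ : ℝ → ℝ),
        (∀ (x : EuclideanSpace ℝ (Fin n)) (ρ : ℝ), 0 < ρ →
          p (ρ • x) = ρ ^ α * p x) ∧
        StrictMonoOn φ (Set.range p) ∧
        ContinuousOn φ (Set.range p) ∧
        (∀ x, f x = φ (p x)) := by
  intro α hα
  -- positive machine for f
  obtain ⟨qp, ψp, hqp0, hqppos, hqph, hψpm, hψpc, hψp0, hψppos, hψpq⟩ :=
    pos_machine hsi h0 hcont hmono hα
  -- positive machine for  g = -f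
  set g : EuclideanSpace ℝ (Fin n) → ℝ := fun x => -f x with hg
  have hsi' : ∀ (x y : EuclideanSpace ℝ (Fin n)) (ρ : ℝ), 0 < ρ →
      (g x ≤ g y ↔ g (ρ • x) ≤ g (ρ • y)) := by
    intro x y ρ hρ
    simp only [hg, neg_le_neg_iff]
    exact hsi y x ρ hρ
  have h0' : g 0 = 0 := by simp [hg, h0]
  have hcont' : ∀ x : EuclideanSpace ℝ (Fin n),
      ContinuousOn (fun t : ℝ => g (t • x)) (Set.Ici 0) := fun x => (hcont x).neg
  have hmono' : ∀ x : EuclideanSpace ℝ (Fin n),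
      (∃ c : ℝ, ∀ t : ℝ, 0 ≤ t → g (t • x) = c) ∨
      StrictMonoOn (fun t : ℝ => g (t • x)) (Set.Ici 0) ∨
      StrictAntiOn (fun t : ℝ => g (t • x)) (Set.Ici 0) := by
    intro x
    rcases hmono x with ⟨c, hc⟩ | h | h
    · exact Or.inl ⟨-c, fun t ht => by simp [hg, hc t ht]⟩
    · exact Or.inr (Or.inr (fun a ha b hb hab => neg_lt_neg (h ha hb hab)))
    · exact Or.inr (Or.inl (fun a ha b hb hab => neg_lt_neg (h ha hb hab)))
  obtain ⟨qn, ψn, hqn0, hqnpos, hqnh, hψnm, hψnc, hψn0, hψnpos, hψnq⟩ :=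
    pos_machine hsi' h0' hcont' hmono' hα
  classical
  set p : EuclideanSpace ℝ (Fin n) → ℝ := fun x => qp x - qn x with hp
  set φ : ℝ → ℝ := fun s => if 0 ≤ s then ψp s else -ψn (-s) with hφdef
  -- basic facts about φ
  have hφnonneg : ∀ s : ℝ, 0 ≤ s → 0 ≤ φ s := by
    intro s hs
    rw [hφdef]; dsimp only; rw [if_pos hs, ← hψp0]
    rcases lt_or_eq_of_le hs with h | h
    · exact (hψpm Set.self_mem_Ici (Set.mem_Ici.2 hs) h).le
    · rw [← h]
  have hφneg : ∀ s : ℝ, s < 0 → φ s < 0 := by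
    intro s hs
    rw [hφdef]; dsimp only; rw [if_neg (not_le.2 hs)]
    exact neg_neg_of_pos (hψnpos _ (neg_pos.2 hs))
  have hφmono : StrictMono φ := by
    intro s t hst
    by_cases hs : 0 ≤ s
    · have ht : 0 ≤ t := hs.trans hst.le
      rw [hφdef]; dsimp only; rw [if_pos hs, if_pos ht]
      exact hψpm (Set.mem_Ici.2 hs) (Set.mem_Ici.2 ht) hst
    · push_neg at hs
      by_cases ht : 0 ≤ t
      · exact lt_of_lt_of_le (hφneg s hs) (hφnonneg t ht)
      · push_neg at ht
        rw [hφdef]; dsimp only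
        rw [if_neg (not_le.2 hs), if_neg (not_le.2 ht), neg_lt_neg_iff]
        exact hψnm (Set.mem_Ici.2 (neg_nonneg.2 ht.le)) (Set.mem_Ici.2 (neg_nonneg.2 hs.le))
          (neg_lt_neg hst)
  have hφ0 : φ 0 = 0 := by rw [hφdef]; dsimp only; rw [if_pos le_rfl]; exact hψp0
  have hφcont : Continuous φ := by
    rw [continuous_iff_continuousAt]
    intro s
    rcases lt_trichotomy s 0 with hs | hs | hs
    · -- negative side
      have hc : ContinuousAt (fun u : ℝ => -ψn (-u)) s := by
        have h1 : ContinuousAt ψn (-s) :=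
          (hψnc (-s) (Set.mem_Ici.2 (neg_nonneg.2 hs.le))).continuousAt
            (Ici_mem_nhds (neg_pos.2 hs))
        exact (h1.comp continuous_neg.continuousAt).neg
      apply hc.congr
      have : Set.Iio (0:ℝ) ∈ nhds s := Iio_mem_nhds hs
      filter_upwards [this] with u hu
      rw [hφdef]; dsimp only; rw [if_neg (not_le.2 hu)]
    · -- at zero
      subst hs
      have hright : Filter.Tendsto φ (nhdsWithin 0 (Set.Ici 0)) (nhds 0) := by
        have h1 : Filter.Tendsto ψp (nhdsWithin 0 (Set.Ici 0)) (nhds 0) := by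
          have := (hψpc 0 Set.self_mem_Ici).tendsto
          rwa [hψp0] at this
        apply h1.congr'
        filter_upwards [self_mem_nhdsWithin] with u hu
        rw [hφdef]; dsimp only; rw [if_pos (Set.mem_Ici.1 hu)]
      have hleft : Filter.Tendsto φ (nhdsWithin 0 (Set.Iic 0)) (nhds 0) := by
        have hnegmap : Filter.Tendsto (fun u : ℝ => -u) (nhdsWithin 0 (Set.Iic 0))
            (nhdsWithin 0 (Set.Ici 0)) := by
          have : Filter.Tendsto (fun u : ℝ => -u) (nhdsWithin 0 (Set.Iic 0))
              (nhdsWithin (-0) (Set.Ici 0)) :=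
            (continuous_neg.continuousWithinAt).tendsto_nhdsWithin
              (fun u hu => Set.mem_Ici.2 (neg_nonneg.2 (Set.mem_Iic.1 hu)))
          rwa [neg_zero] at this
        have h1 : Filter.Tendsto ψn (nhdsWithin 0 (Set.Ici 0)) (nhds 0) := by
          have := (hψnc 0 Set.self_mem_Ici).tendsto
          rwa [hψn0] at this
        have h2 : Filter.Tendsto (fun u : ℝ => -ψn (-u)) (nhdsWithin 0 (Set.Iic 0))
            (nhds 0) := by
          have := (h1.comp hnegmap).neg
          rwa [neg_zero] at this
        apply h2.congr'
        filter_upwards [self_mem_nhdsWithin] with u hu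
        rcases lt_or_eq_of_le (Set.mem_Iic.1 hu) with h | h
        · rw [hφdef]; dsimp only; rw [if_neg (not_le.2 h)]
        · subst h
          rw [hφ0, neg_zero, hψn0, neg_zero]
      unfold ContinuousAt
      rw [hφ0]
      have hT : Filter.Tendsto φ (nhdsWithin 0 (Set.Iic 0) ⊔ nhdsWithin 0 (Set.Ici 0))
          (nhds 0) := Filter.tendsto_sup.2 ⟨hleft, hright⟩
      rwa [nhdsLE_sup_nhdsGE] at hT
    · -- positive side
      have hc : ContinuousAt ψp s :=
        (hψpc s (Set.mem_Ici.2 hs.le)).continuousAt (Ici_mem_nhds hs)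
      apply hc.congr
      have : Set.Ioi (0:ℝ) ∈ nhds s := Ioi_mem_nhds hs
      filter_upwards [this] with u hu
      rw [hφdef]; dsimp only; rw [if_pos (Set.mem_Ioi.1 hu).le]
  refine ⟨p, φ, ?_, hφmono.strictMonoOn _, hφcont.continuousOn, ?_⟩
  · intro x ρ hρ
    rw [hp]; dsimp only
    rw [hqph x ρ hρ, hqnh x ρ hρ, mul_sub]
  · intro x
    rcases lt_trichotomy (f x) 0 with hx | hx | hx
    · -- negative value
      have hgx : 0 < g x := by rw [hg]; dsimp only; linarith
      have hq : qp x = 0 := hqp0 x (by linarith)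
      have hqn' : 0 < qn x := hqnpos x hgx
      have hpx : p x = -qn x := by rw [hp]; dsimp only; rw [hq, zero_sub]
      rw [hpx, hφdef]; dsimp only
      rw [if_neg (not_le.2 (neg_neg_of_pos hqn')), neg_neg, hψnq x hgx]
      rw [hg]; dsimp only; rw [neg_neg]
    · -- zero value
      have hq : qp x = 0 := hqp0 x (by rw [hx]; exact lt_irrefl 0)
      have hq' : qn x = 0 := hqn0 x (by rw [hg]; dsimp only; rw [hx, neg_zero]; exact lt_irrefl 0)
      have hpx : p x = 0 := by rw [hp]; dsimp only; rw [hq, hq', sub_zero]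
      rw [hpx, hφ0, hx]
    · -- positive value
      have hq' : qn x = 0 := hqn0 x (by rw [hg]; dsimp only; rw [not_lt]; linarith)
      have hpx : p x = qp x := by rw [hp]; dsimp only; rw [hq', sub_zero]
      rw [hpx, hφdef]; dsimp only
      rw [if_pos (hqppos x hx).le, hψpq x hx]
end

section
/- Let f : ℝⁿ → ℝ be a continuous scaling-invariant function with respect to 0 with f(0) = 0. Then for every α > 0 there exist a continuous positively homogeneous function p : ℝⁿ → ℝ of degree α and a function φ : ℝ → ℝ that is strictly increasing and continuous on the range of p, such that f(x) = φ(p(x)) for all x ∈ ℝⁿ. -/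
open Filter Topology Set


section Aux

variable {E : Type*} [NormedAddCommGroup E] [NormedSpace ℝ E]

private lemma aux_sign {f : E → ℝ}
    (hsi : ∀ (x y : E) (ρ : ℝ), 0 < ρ → (f x ≤ f y ↔ f (ρ • x) ≤ f (ρ • y)))
    (h0 : f 0 = 0) (x : E) {ρ : ℝ} (hρ : 0 < ρ) : 0 < f x ↔ 0 < f (ρ • x) := by
  have h := hsi x 0 ρ hρ
  rw [smul_zero, h0] at h
  rw [← not_le, ← not_le]
  exact not_congr h

private lemma aux_eq {f : E → ℝ}
    (hsi : ∀ (x y : E) (ρ : ℝ), 0 < ρ → (f x ≤ f y ↔ f (ρ • x) ≤ f (ρ • y)))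
    {x y : E} (hxy : f x = f y) {ρ : ℝ} (hρ : 0 < ρ) : f (ρ • x) = f (ρ • y) :=
  le_antisymm ((hsi x y ρ hρ).1 hxy.le) ((hsi y x ρ hρ).1 hxy.ge)

private lemma aux_ray_lt {f : E → ℝ} (hf : Continuous f)
    (hsi : ∀ (x y : E) (ρ : ℝ), 0 < ρ → (f x ≤ f y ↔ f (ρ • x) ≤ f (ρ • y)))
    (h0 : f 0 = 0)
    {x : E} (hx : 0 < f x) {r : ℝ} (hr0 : 0 < r) (hr1 : r < 1) : f (r • x) < f x := by
  by_contra hcon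
  push_neg at hcon
  have key : ∀ k : ℕ, f x ≤ f (r ^ k • x) := by
    intro k
    induction k with
    | zero => simp
    | succ k ih =>
      have h2 := (hsi x (r • x) (r ^ k) (pow_pos hr0 k)).1 hcon
      rw [smul_smul, ← pow_succ] at h2
      exact ih.trans h2
  have hlim : Tendsto (fun k : ℕ => f (r ^ k • x)) atTop (𝓝 0) := by
    have h1 : Tendsto (fun k : ℕ => (r ^ k) • x) atTop (𝓝 ((0:ℝ) • x)) :=
      (tendsto_pow_atTop_nhds_zero_of_lt_one hr0.le hr1).smul_const x
    rw [zero_smul] at h1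
    have h2 := (hf.tendsto 0).comp h1
    rw [h0] at h2
    exact h2
  have := ge_of_tendsto' hlim key
  linarith

private lemma aux_smono {f : E → ℝ} (hf : Continuous f)
    (hsi : ∀ (x y : E) (ρ : ℝ), 0 < ρ → (f x ≤ f y ↔ f (ρ • x) ≤ f (ρ • y)))
    (h0 : f 0 = 0) {u : E} (hu : 0 < f u) :
    StrictMonoOn (fun s : ℝ => f (s • u)) (Set.Ici 0) := by
  intro s hs t _ hst
  have ht0 : 0 < t := lt_of_le_of_lt hs hst
  rcases eq_or_lt_of_le (show (0:ℝ) ≤ s from hs) with rfl | hs0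
  · have := (aux_sign hsi h0 u ht0).1 hu
    simpa [h0] using this
  · have hkey : (s / t) • (t • u) = s • u := by
      rw [smul_smul, div_mul_cancel₀ _ ht0.ne']
    have := aux_ray_lt hf hsi h0 ((aux_sign hsi h0 u ht0).1 hu)
      (div_pos hs0 ht0) ((div_lt_one ht0).2 hst)
    simpa [hkey] using this

private lemma aux_exists {f : E → ℝ} (hf : Continuous f)
    (hsi : ∀ (x y : E) (ρ : ℝ), 0 < ρ → (f x ≤ f y ↔ f (ρ • x) ≤ f (ρ • y)))
    (h0 : f 0 = 0) {u x : E} (hu : 0 < f u) (hx : 0 < f x) :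
    ∃ s : ℝ, 0 < s ∧ f (s • u) = f x := by
  have hcx : Continuous fun t : ℝ => f (t • x) := hf.comp (continuous_id.smul continuous_const)
  have hcu : Continuous fun t : ℝ => f (t • u) := hf.comp (continuous_id.smul continuous_const)
  have htend : Tendsto (fun t : ℝ => f (t • x)) (𝓝[>] 0) (𝓝 0) := by
    have := hcx.tendsto 0
    simp only [zero_smul, h0] at this
    exact this.mono_left nhdsWithin_le_nhds
  obtain ⟨t, ht_mem, ht_lt⟩ := ((eventually_mem_nhdsWithin.and
    (htend.eventually_lt_const hu))).exists
  have ht0 : (0:ℝ) < t := ht_mem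
  have htx : 0 < f (t • x) := (aux_sign hsi h0 x ht0).1 hx
  have hmem : f (t • x) ∈ Set.Icc (f ((0:ℝ) • u)) (f ((1:ℝ) • u)) := by
    simp only [zero_smul, one_smul, h0]
    exact ⟨htx.le, ht_lt.le⟩
  obtain ⟨s, hs_mem, hs_eq⟩ := intermediate_value_Icc (zero_le_one) hcu.continuousOn hmem
  have hs0 : 0 < s := by
    rcases eq_or_lt_of_le hs_mem.1 with rfl | h
    · exfalso
      simp only [zero_smul, h0] at hs_eq
      linarith
    · exact h
  have hmain := aux_eq hsi hs_eq (inv_pos.2 ht0)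
  rw [smul_smul, smul_smul, inv_mul_cancel₀ ht0.ne', one_smul] at hmain
  exact ⟨t⁻¹ * s, mul_pos (inv_pos.2 ht0) hs0, hmain⟩

end Aux

section Pos
variable {E : Type*} [NormedAddCommGroup E] [NormedSpace ℝ E]

private lemma pos_side (f : E → ℝ) (hf : Continuous f)
    (hsi : ∀ (x y : E) (ρ : ℝ), 0 < ρ → (f x ≤ f y ↔ f (ρ • x) ≤ f (ρ • y)))
    (h0 : f 0 = 0) :
    ∃ (u : E) (s : E → ℝ),
      (∀ x, ¬ 0 < f x → s x = 0) ∧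
      (∀ x, 0 < f x → 0 < s x) ∧
      (∀ x, 0 < f x → f (s x • u) = f x) ∧
      (∀ (x : E) (ρ : ℝ), 0 < ρ → 0 < f x → s (ρ • x) = ρ * s x) ∧
      (∀ x y, 0 < f x → 0 < f y → (s x < s y ↔ f x < f y)) ∧
      (∀ x₀, 0 < f x₀ → Filter.Tendsto s (𝓝 x₀) (𝓝 (s x₀))) ∧
      (∀ x₀, f x₀ = 0 → ∀ δ : ℝ, 0 < δ → ∀ᶠ x in 𝓝 x₀, s x < δ) := by
  by_cases hex : ∃ v, 0 < f v
  case neg =>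
    push_neg at hex
    refine ⟨0, fun _ => 0, fun _ _ => rfl, ?_, ?_, ?_, ?_, ?_, ?_⟩
    · exact fun x hx => absurd hx (hex x).not_gt
    · exact fun x hx => absurd hx (hex x).not_gt
    · exact fun x ρ _ hx => absurd hx (hex x).not_gt
    · exact fun x y hx => absurd hx (hex x).not_gt
    · exact fun x hx => absurd hx (hex x).not_gt
    · exact fun x₀ _ δ hδ => Eventually.of_forall fun _ => hδ
  case pos =>
    obtain ⟨u, hu⟩ := hex
    have H : ∀ x : E, ∃ sx : ℝ, (¬ 0 < f x → sx = 0) ∧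
        (0 < f x → 0 < sx ∧ f (sx • u) = f x) := by
      intro x
      by_cases hx : 0 < f x
      · obtain ⟨sx, h1, h2⟩ := aux_exists hf hsi h0 hu hx
        exact ⟨sx, fun h => absurd hx h, fun _ => ⟨h1, h2⟩⟩
      · exact ⟨0, fun _ => rfl, fun h => absurd h hx⟩
    choose s hs0 hs using H
    have g_mono := aux_smono hf hsi h0 hu
    have hs_pos : ∀ x, 0 < f x → 0 < s x := fun x hx => (hs x hx).1
    have hs_eq : ∀ x, 0 < f x → f (s x • u) = f x := fun x hx => (hs x hx).2
    refine ⟨u, s, hs0, hs_pos, hs_eq, ?_, ?_, ?_, ?_⟩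
    · -- homogeneity
      intro x ρ hρ hx
      have hρx : 0 < f (ρ • x) := (aux_sign hsi h0 x hρ).1 hx
      have h1 : f (s (ρ • x) • u) = f (ρ • x) := hs_eq _ hρx
      have h2 : f ((ρ * s x) • u) = f (ρ • x) := by
        rw [← smul_smul]
        exact aux_eq hsi (hs_eq x hx) hρ
      exact g_mono.injOn (hs_pos _ hρx).le (mul_pos hρ (hs_pos x hx)).le (h1.trans h2.symm)
    · -- order iff
      intro x y hx hy
      rw [← hs_eq x hx, ← hs_eq y hy]
      exact (g_mono.lt_iff_lt (hs_pos x hx).le (hs_pos y hy).le).symm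
    · -- tendsto at positive points
      intro x₀ hx₀
      rw [tendsto_order]
      constructor
      · intro a ha
        have hU : ∀ᶠ x in 𝓝 x₀, 0 < f x := (hf.tendsto x₀).eventually_const_lt hx₀
        rcases le_or_gt a 0 with ha0 | ha0
        · filter_upwards [hU] with x hx
          exact lt_of_le_of_lt ha0 (hs_pos x hx)
        · have hga : f (a • u) < f x₀ := by
            have := g_mono ha0.le (hs_pos x₀ hx₀).le ha
            simpa only [hs_eq x₀ hx₀] using this
          have hev : ∀ᶠ x in 𝓝 x₀, f (a • u) < f x :=
            (hf.tendsto x₀).eventually_const_lt hga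
          filter_upwards [hev, hU] with x h1 h2
          by_contra hcon
          push_neg at hcon
          have hle : f (s x • u) ≤ f (a • u) :=
            g_mono.monotoneOn (hs_pos x h2).le ha0.le hcon
          rw [hs_eq x h2] at hle
          linarith
      · intro b hb
        have hU : ∀ᶠ x in 𝓝 x₀, 0 < f x := (hf.tendsto x₀).eventually_const_lt hx₀
        have hgb : f x₀ < f (b • u) := by
          have := g_mono (hs_pos x₀ hx₀).le ((hs_pos x₀ hx₀).trans hb).le hb
          simpa only [hs_eq x₀ hx₀] using this
        have hev : ∀ᶠ x in 𝓝 x₀, f x < f (b • u) :=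
          (hf.tendsto x₀).eventually_lt_const hgb
        filter_upwards [hev, hU] with x h1 h2
        by_contra hcon
        push_neg at hcon
        have hle : f (b • u) ≤ f (s x • u) :=
          g_mono.monotoneOn ((hs_pos x₀ hx₀).trans hb).le (hs_pos x h2).le hcon
        rw [hs_eq x h2] at hle
        linarith
    · -- small near zeros of f
      intro x₀ hx₀ δ hδ
      have hgδ : 0 < f (δ • u) := (aux_sign hsi h0 u hδ).1 hu
      have hev : ∀ᶠ x in 𝓝 x₀, f x < f (δ • u) := by
        apply (hf.tendsto x₀).eventually_lt_const
        rw [hx₀]; exact hgδ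
      filter_upwards [hev] with x h1
      by_cases hx : 0 < f x
      · by_contra hcon
        push_neg at hcon
        have hle : f (δ • u) ≤ f (s x • u) := g_mono.monotoneOn hδ.le (hs_pos x hx).le hcon
        rw [hs_eq x hx] at hle
        linarith
      · rw [hs0 x hx]; exact hδ

end Pos
/-- A continuous scaling-invariant function `f` w.r.t. `0` with
`f 0 = 0` is, for every `α > 0`, the composite of a function strictly increasing and
continuous on the range of a continuous positively homogeneous function `p` of
degree `α` with `p`. -/
theorem stmt_8 {n : ℕ} (f : EuclideanSpace ℝ (Fin n) → ℝ)
    (hf : Continuous f)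
    (hsi : ∀ (x y : EuclideanSpace ℝ (Fin n)) (ρ : ℝ), 0 < ρ →
      (f x ≤ f y ↔ f (ρ • x) ≤ f (ρ • y)))
    (h0 : f 0 = 0) :
    ∀ α : ℝ, 0 < α →
      ∃ (p : EuclideanSpace ℝ (Fin n) → ℝ) (φ : ℝ → ℝ),
        Continuous p ∧
        (∀ (x : EuclideanSpace ℝ (Fin n)) (ρ : ℝ), 0 < ρ →
          p (ρ • x) = ρ ^ α * p x) ∧
        StrictMonoOn φ (Set.range p) ∧
        ContinuousOn φ (Set.range p) ∧
        (∀ x, f x = φ (p x)) := by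
  intro α hα
  have hα' : α ≠ 0 := ne_of_gt hα
  set F : EuclideanSpace ℝ (Fin n) → ℝ := fun x => -f x with hF_def
  have hFc : Continuous F := hf.neg
  have hFsi : ∀ (x y : EuclideanSpace ℝ (Fin n)) (ρ : ℝ), 0 < ρ →
      (F x ≤ F y ↔ F (ρ • x) ≤ F (ρ • y)) := by
    intro x y ρ hρ
    simp only [hF_def, neg_le_neg_iff]
    exact hsi y x ρ hρ
  have hF0 : F 0 = 0 := by simp [hF_def, h0]
  obtain ⟨up, sp, hsp0, hsp_pos, hsp_eq, hsp_hom, hsp_iff, hsp_tendsto, hsp_small⟩ :=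
    pos_side f hf hsi h0
  obtain ⟨um, sm, hsm0, hsm_pos, hsm_eq, hsm_hom, hsm_iff, hsm_tendsto, hsm_small⟩ :=
    pos_side F hFc hFsi hF0
  set p : EuclideanSpace ℝ (Fin n) → ℝ :=
    fun x => if 0 < f x then sp x ^ α else if f x < 0 then -(sm x ^ α) else 0 with hp_def
  set φ : ℝ → ℝ :=
    fun r => f ((max r 0 ^ α⁻¹) • up) + f ((max (-r) 0 ^ α⁻¹) • um) with hφ_def
  have hp_pos : ∀ x, 0 < f x → p x = sp x ^ α := by
    intro x hx; simp only [hp_def]; rw [if_pos hx]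
  have hp_neg : ∀ x, f x < 0 → p x = -(sm x ^ α) := by
    intro x hx; simp only [hp_def]; rw [if_neg (not_lt.2 hx.le), if_pos hx]
  have hp_zero : ∀ x, f x = 0 → p x = 0 := by
    intro x hx; simp only [hp_def]
    rw [if_neg (by rw [hx]; exact lt_irrefl 0), if_neg (by rw [hx]; exact lt_irrefl 0)]
  have hp_gt : ∀ x, 0 < f x → 0 < p x := by
    intro x hx; rw [hp_pos x hx]; exact Real.rpow_pos_of_pos (hsp_pos x hx) α
  have hp_lt : ∀ x, f x < 0 → p x < 0 := by
    intro x hx; rw [hp_neg x hx]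
    exact neg_lt_zero.2 (Real.rpow_pos_of_pos (hsm_pos x (neg_pos.2 hx)) α)
  have hp_le : ∀ x, ¬ 0 < f x → p x ≤ 0 := by
    intro x hx
    rcases (not_lt.1 hx).lt_or_eq with h | h
    · exact (hp_lt x h).le
    · exact le_of_eq (hp_zero x h)
  have hp_ge : ∀ x, ¬ f x < 0 → 0 ≤ p x := by
    intro x hx
    rcases (not_lt.1 hx).lt_or_eq with h | h
    · exact (hp_gt x h).le
    · exact ge_of_eq (hp_zero x h.symm)
  have hp_gt' : ∀ x, 0 < p x → 0 < f x := by
    intro x hx; by_contra hc; exact absurd hx (not_lt.2 (hp_le x hc))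
  have hkey : ∀ x, f x = φ (p x) := by
    intro x
    rcases lt_trichotomy (f x) 0 with hx | hx | hx
    · have hFx : 0 < F x := neg_pos.2 hx
      rw [hp_neg x hx]
      simp only [hφ_def]
      rw [max_eq_right (neg_nonpos.2 (Real.rpow_pos_of_pos (hsm_pos x hFx) α).le), neg_neg,
          max_eq_left (Real.rpow_pos_of_pos (hsm_pos x hFx) α).le,
          Real.zero_rpow (inv_ne_zero hα'), zero_smul, h0,
          Real.rpow_rpow_inv (hsm_pos x hFx).le hα']
      have h2 : f (sm x • um) = f x := neg_injective (hsm_eq x hFx)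
      rw [h2, zero_add]
    · rw [hp_zero x hx, hx]
      simp [hφ_def, Real.zero_rpow (inv_ne_zero hα'), h0]
    · rw [hp_pos x hx]
      simp only [hφ_def]
      rw [max_eq_left (Real.rpow_pos_of_pos (hsp_pos x hx) α).le,
          max_eq_right (neg_nonpos.2 (Real.rpow_pos_of_pos (hsp_pos x hx) α).le),
          Real.zero_rpow (inv_ne_zero hα'), zero_smul, h0,
          Real.rpow_rpow_inv (hsp_pos x hx).le hα', hsp_eq x hx, add_zero]
  refine ⟨p, φ, ?_, ?_, ?_, ?_, hkey⟩
  · -- Continuous p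
    rw [continuous_iff_continuousAt]
    intro x₀
    rcases lt_trichotomy (f x₀) 0 with h | h | h
    · have hFx₀ : 0 < F x₀ := neg_pos.2 h
      have hU : ∀ᶠ x in 𝓝 x₀, f x < 0 := (hf.tendsto x₀).eventually_lt_const h
      have htend := hsm_tendsto x₀ hFx₀
      have hrpow : ContinuousAt (fun t : ℝ => t ^ α) (sm x₀) :=
        Real.continuousAt_rpow_const _ _ (Or.inl (hsm_pos x₀ hFx₀).ne')
      have h2 : Filter.Tendsto (fun x => -(sm x ^ α)) (𝓝 x₀) (𝓝 (-(sm x₀ ^ α))) :=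
        (hrpow.tendsto.comp htend).neg
      have heq : (fun x => -(sm x ^ α)) =ᶠ[𝓝 x₀] p := by
        filter_upwards [hU] with x hx
        exact (hp_neg x hx).symm
      rw [ContinuousAt, hp_neg x₀ h]
      exact h2.congr' heq
    · rw [ContinuousAt, hp_zero x₀ h]
      rw [tendsto_order]
      constructor
      · intro a ha
        have hδ : (0:ℝ) < (-a) ^ α⁻¹ := Real.rpow_pos_of_pos (neg_pos.2 ha) _
        have hF0' : F x₀ = 0 := by rw [hF_def]; simp [h]
        filter_upwards [hsm_small x₀ hF0' _ hδ] with x hx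
        by_cases hfx : f x < 0
        · have hFx : 0 < F x := neg_pos.2 hfx
          rw [hp_neg x hfx]
          have h3 : sm x ^ α < ((-a) ^ α⁻¹) ^ α :=
            Real.rpow_lt_rpow (hsm_pos x hFx).le hx hα
          rw [Real.rpow_inv_rpow (neg_pos.2 ha).le hα'] at h3
          linarith
        · exact lt_of_lt_of_le ha (hp_ge x hfx)
      · intro b hb
        have hδ : (0:ℝ) < b ^ α⁻¹ := Real.rpow_pos_of_pos hb _
        filter_upwards [hsp_small x₀ h _ hδ] with x hx
        by_cases hfx : 0 < f x
        · rw [hp_pos x hfx]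
          have h3 : sp x ^ α < (b ^ α⁻¹) ^ α :=
            Real.rpow_lt_rpow (hsp_pos x hfx).le hx hα
          rwa [Real.rpow_inv_rpow hb.le hα'] at h3
        · exact lt_of_le_of_lt (hp_le x hfx) hb
    · have hU : ∀ᶠ x in 𝓝 x₀, 0 < f x := (hf.tendsto x₀).eventually_const_lt h
      have htend := hsp_tendsto x₀ h
      have hrpow : ContinuousAt (fun t : ℝ => t ^ α) (sp x₀) :=
        Real.continuousAt_rpow_const _ _ (Or.inl (hsp_pos x₀ h).ne')
      have h2 : Filter.Tendsto (fun x => sp x ^ α) (𝓝 x₀) (𝓝 (sp x₀ ^ α)) :=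
        hrpow.tendsto.comp htend
      have heq : (fun x => sp x ^ α) =ᶠ[𝓝 x₀] p := by
        filter_upwards [hU] with x hx
        exact (hp_pos x hx).symm
      rw [ContinuousAt, hp_pos x₀ h]
      exact h2.congr' heq
  · -- homogeneity
    intro x ρ hρ
    rcases lt_trichotomy (f x) 0 with hx | hx | hx
    · have hFx : 0 < F x := neg_pos.2 hx
      have hx' : f (ρ • x) < 0 := neg_pos.1 ((aux_sign hFsi hF0 x hρ).1 hFx)
      rw [hp_neg _ hx', hp_neg x hx, hsm_hom x ρ hρ hFx,
        Real.mul_rpow hρ.le (hsm_pos x hFx).le, mul_neg]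
    · have h1 : ¬ 0 < f (ρ • x) := fun hc => by
        have := (aux_sign hsi h0 x hρ).2 hc
        rw [hx] at this
        exact lt_irrefl 0 this
      have h2 : ¬ f (ρ • x) < 0 := fun hc => by
        have := (aux_sign hFsi hF0 x hρ).2 (neg_pos.2 hc)
        have h3 : f x < 0 := neg_pos.1 this
        rw [hx] at h3
        exact lt_irrefl 0 h3
      have hx' : f (ρ • x) = 0 := le_antisymm (not_lt.1 h1) (not_lt.1 h2)
      rw [hp_zero _ hx', hp_zero x hx, mul_zero]
    · have hx' : 0 < f (ρ • x) := (aux_sign hsi h0 x hρ).1 hx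
      rw [hp_pos _ hx', hp_pos x hx, hsp_hom x ρ hρ hx,
        Real.mul_rpow hρ.le (hsp_pos x hx).le]
  · -- StrictMonoOn
    have hmono : ∀ x y, p x < p y → f x < f y := by
      intro x y hlt
      rcases lt_trichotomy (f x) 0 with hx | hx | hx
      · rcases lt_trichotomy (f y) 0 with hy | hy | hy
        · have hFx : 0 < F x := neg_pos.2 hx
          have hFy : 0 < F y := neg_pos.2 hy
          rw [hp_neg x hx, hp_neg y hy, neg_lt_neg_iff] at hlt
          have h2 : sm y < sm x := by
            by_contra hc
            push_neg at hc
            exact absurd (Real.rpow_le_rpow (hsm_pos x hFx).le hc hα.le) (not_le.2 hlt)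
          have h3 : F y < F x := (hsm_iff y x hFy hFx).1 h2
          have h4 : -f y < -f x := h3
          linarith
        · rw [hy]; exact hx
        · exact hx.trans hy
      · rw [hp_zero x hx] at hlt
        rw [hx]
        exact hp_gt' y hlt
      · have h1 := hp_gt x hx
        have hy : 0 < f y := hp_gt' y (h1.trans hlt)
        rw [hp_pos x hx, hp_pos y hy] at hlt
        have h2 : sp x < sp y := by
          by_contra hc
          push_neg at hc
          exact absurd (Real.rpow_le_rpow (hsp_pos y hy).le hc hα.le) (not_le.2 hlt)
        exact (hsp_iff x y hx hy).1 h2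
    rintro a ⟨x, rfl⟩ b ⟨y, rfl⟩ hab
    rw [← hkey x, ← hkey y]
    exact hmono x y hab
  · -- ContinuousOn φ
    have hrc : Continuous fun r : ℝ => (max r 0) ^ α⁻¹ := by
      rw [continuous_iff_continuousAt]
      intro r
      exact (Real.continuousAt_rpow_const _ _ (Or.inr (inv_pos.2 hα).le)).comp
        ((continuous_id.max continuous_const).continuousAt)
    have hφc : Continuous φ := by
      simp only [hφ_def]
      exact (hf.comp (hrc.smul continuous_const)).add
        (hf.comp ((hrc.comp continuous_neg).smul continuous_const))
    exact hφc.continuousOn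
end

section
/- Let f : ℝⁿ → ℝ be a scaling-invariant function with respect to 0 with f(0) = 0. Then there exist a positively homogeneous function p : ℝⁿ → ℝ of degree 1 and a function φ : ℝ → ℝ that is strictly increasing on the range of p with f(x) = φ(p(x)) for all x ∈ ℝⁿ, if and only if the following holds: for every x ∈ ℝⁿ the function f_x : t ↦ f(tx) is either constant on [0,∞) or strictly monotonic on [0,∞); any two strictly increasing functions f_x and f_y have the same image; and any two strictly decreasing functions f_x and f_y have the same image. -/
/-- A scaling-invariant function `f` w.r.t. `0` with `f 0 = 0` is the
composite of a function strictly increasing on the range of a positively homogeneous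
function `p` of degree `1` with `p`, if and only if every restriction `t ↦ f (t • x)`
is constant or strictly monotonic on `[0,∞)`, the strictly increasing restrictions
share the same image, and the strictly decreasing ones too. -/
theorem stmt_9 {n : ℕ} (f : EuclideanSpace ℝ (Fin n) → ℝ)
    (hsi : ∀ (x y : EuclideanSpace ℝ (Fin n)) (ρ : ℝ), 0 < ρ →
      (f x ≤ f y ↔ f (ρ • x) ≤ f (ρ • y)))
    (h0 : f 0 = 0) :
    (∃ (p : EuclideanSpace ℝ (Fin n) → ℝ) (φ : ℝ → ℝ),
        (∀ (x : EuclideanSpace ℝ (Fin n)) (ρ : ℝ), 0 < ρ → p (ρ • x) = ρ * p x) ∧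
        StrictMonoOn φ (Set.range p) ∧
        (∀ x, f x = φ (p x))) ↔
    ((∀ x : EuclideanSpace ℝ (Fin n),
        (∃ c : ℝ, ∀ t : ℝ, 0 ≤ t → f (t • x) = c) ∨
        StrictMonoOn (fun t : ℝ => f (t • x)) (Set.Ici 0) ∨
        StrictAntiOn (fun t : ℝ => f (t • x)) (Set.Ici 0)) ∧
      (∀ x y : EuclideanSpace ℝ (Fin n),
        StrictMonoOn (fun t : ℝ => f (t • x)) (Set.Ici 0) →
        StrictMonoOn (fun t : ℝ => f (t • y)) (Set.Ici 0) →
        (fun t : ℝ => f (t • x)) '' Set.Ici 0 = (fun t : ℝ => f (t • y)) '' Set.Ici 0) ∧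
      (∀ x y : EuclideanSpace ℝ (Fin n),
        StrictAntiOn (fun t : ℝ => f (t • x)) (Set.Ici 0) →
        StrictAntiOn (fun t : ℝ => f (t • y)) (Set.Ici 0) →
        (fun t : ℝ => f (t • x)) '' Set.Ici 0 = (fun t : ℝ => f (t • y)) '' Set.Ici 0)) := by
  classical
  constructor
  · -- forward direction
    rintro ⟨p, φ, hph, hφ, hfp⟩
    have hp0 : p 0 = 0 := by
      have h := hph 0 2 (by norm_num)
      rw [smul_zero] at h
      linarith
    have hft : ∀ (x : EuclideanSpace ℝ (Fin n)) (t : ℝ), 0 ≤ t →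
        f (t • x) = φ (t * p x) ∧ (t * p x) ∈ Set.range p := by
      intro x t ht
      rcases ht.lt_or_eq with h | h
      · constructor
        · rw [hfp (t • x), hph x t h]
        · rw [← hph x t h]; exact ⟨t • x, rfl⟩
      · rw [← h]
        constructor
        · rw [zero_smul, zero_mul, ← hp0, ← hfp]
        · rw [zero_mul]; exact ⟨0, hp0⟩
    -- from strict monotonicity of the restriction, deduce the sign of p x
    have hppos : ∀ x : EuclideanSpace ℝ (Fin n),
        StrictMonoOn (fun t : ℝ => f (t • x)) (Set.Ici 0) → 0 < p x := by
      intro x hx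
      have e0 := hft x 0 le_rfl
      have e1 := hft x 1 zero_le_one
      have h1 : f ((0:ℝ) • x) < f ((1:ℝ) • x) :=
        hx (Set.mem_Ici.mpr le_rfl) (Set.mem_Ici.mpr zero_le_one) one_pos
      rcases lt_trichotomy (p x) 0 with h | h | h
      · exfalso
        have h2 := hφ e1.2 e0.2 (by nlinarith : 1 * p x < 0 * p x)
        rw [e0.1, e1.1] at h1
        linarith
      · exfalso
        rw [e0.1, e1.1, h, mul_zero, mul_zero] at h1
        exact lt_irrefl _ h1
      · exact h
    have hpneg : ∀ x : EuclideanSpace ℝ (Fin n),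
        StrictAntiOn (fun t : ℝ => f (t • x)) (Set.Ici 0) → p x < 0 := by
      intro x hx
      have e0 := hft x 0 le_rfl
      have e1 := hft x 1 zero_le_one
      have h1 : f ((1:ℝ) • x) < f ((0:ℝ) • x) :=
        hx (Set.mem_Ici.mpr le_rfl) (Set.mem_Ici.mpr zero_le_one) one_pos
      rcases lt_trichotomy (p x) 0 with h | h | h
      · exact h
      · exfalso
        rw [e0.1, e1.1, h, mul_zero, mul_zero] at h1
        exact lt_irrefl _ h1
      · exfalso
        have h2 := hφ e0.2 e1.2 (by nlinarith : 0 * p x < 1 * p x)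
        rw [e0.1, e1.1] at h1
        linarith
    have keyinc : ∀ x y : EuclideanSpace ℝ (Fin n), 0 < p x → 0 < p y →
        ((fun t : ℝ => f (t • x)) '' Set.Ici 0) ⊆ ((fun t : ℝ => f (t • y)) '' Set.Ici 0) := by
      rintro x y hx hy z ⟨t, ht, rfl⟩
      have ht' : (0:ℝ) ≤ t := ht
      have hnn : (0:ℝ) ≤ t * p x / p y := div_nonneg (mul_nonneg ht' hx.le) hy.le
      refine ⟨t * p x / p y, Set.mem_Ici.mpr hnn, ?_⟩
      show f ((t * p x / p y) • y) = f (t • x)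
      rw [(hft y _ hnn).1, div_mul_cancel₀ _ hy.ne', (hft x t ht').1]
    have keydec : ∀ x y : EuclideanSpace ℝ (Fin n), p x < 0 → p y < 0 →
        ((fun t : ℝ => f (t • x)) '' Set.Ici 0) ⊆ ((fun t : ℝ => f (t • y)) '' Set.Ici 0) := by
      rintro x y hx hy z ⟨t, ht, rfl⟩
      have ht' : (0:ℝ) ≤ t := ht
      have hnn : (0:ℝ) ≤ t * p x / p y := by
        rw [div_nonneg_iff]
        exact Or.inr ⟨mul_nonpos_of_nonneg_of_nonpos ht' hx.le, hy.le⟩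
      refine ⟨t * p x / p y, Set.mem_Ici.mpr hnn, ?_⟩
      show f ((t * p x / p y) • y) = f (t • x)
      rw [(hft y _ hnn).1, div_mul_cancel₀ _ hy.ne, (hft x t ht').1]
    refine ⟨?_, ?_, ?_⟩
    · intro x
      rcases lt_trichotomy (p x) 0 with h | h | h
      · right; right
        intro a ha b hb hab
        have ea := hft x a ha
        have eb := hft x b hb
        show f (b • x) < f (a • x)
        rw [ea.1, eb.1]
        exact hφ eb.2 ea.2 (mul_lt_mul_of_neg_right hab h)
      · left
        exact ⟨φ 0, fun t ht => by rw [(hft x t ht).1, h, mul_zero]⟩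
      · right; left
        intro a ha b hb hab
        have ea := hft x a ha
        have eb := hft x b hb
        show f (a • x) < f (b • x)
        rw [ea.1, eb.1]
        exact hφ ea.2 eb.2 (mul_lt_mul_of_pos_right hab h)
    · intro x y hx hy
      exact Set.Subset.antisymm (keyinc x y (hppos x hx) (hppos y hy))
        (keyinc y x (hppos y hy) (hppos x hx))
    · intro x y hx hy
      exact Set.Subset.antisymm (keydec x y (hpneg x hx) (hpneg y hy))
        (keydec y x (hpneg y hy) (hpneg x hx))
  · -- backward direction
    rintro ⟨htri, hinc, hdec⟩
    have hEq : ∀ (x y : EuclideanSpace ℝ (Fin n)) (ρ : ℝ), 0 < ρ → f x = f y →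
        f (ρ • x) = f (ρ • y) := fun x y ρ hρ h =>
      le_antisymm ((hsi x y ρ hρ).1 h.le) ((hsi y x ρ hρ).1 h.ge)
    have hincf : ∀ x : EuclideanSpace ℝ (Fin n),
        StrictMonoOn (fun t : ℝ => f (t • x)) (Set.Ici 0) → 0 < f x := by
      intro x hx
      have h := hx (Set.mem_Ici.mpr le_rfl) (Set.mem_Ici.mpr zero_le_one) one_pos
      simpa [h0] using h
    have hdecf : ∀ x : EuclideanSpace ℝ (Fin n),
        StrictAntiOn (fun t : ℝ => f (t • x)) (Set.Ici 0) → f x < 0 := by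
      intro x hx
      have h := hx (Set.mem_Ici.mpr le_rfl) (Set.mem_Ici.mpr zero_le_one) one_pos
      simpa [h0] using h
    have hnotboth : ∀ x : EuclideanSpace ℝ (Fin n),
        StrictMonoOn (fun t : ℝ => f (t • x)) (Set.Ici 0) →
        StrictAntiOn (fun t : ℝ => f (t • x)) (Set.Ici 0) → False := by
      intro x h1 h2
      have := hincf x h1
      have := hdecf x h2
      linarith
    have hinc_scale : ∀ (x : EuclideanSpace ℝ (Fin n)) (ρ : ℝ), 0 < ρ →
        StrictMonoOn (fun t : ℝ => f (t • x)) (Set.Ici 0) →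
        StrictMonoOn (fun t : ℝ => f (t • (ρ • x))) (Set.Ici 0) := by
      intro x ρ hρ hx a ha b hb hab
      have ha' : (0:ℝ) ≤ a := ha
      have hb' : (0:ℝ) ≤ b := hb
      show f (a • ρ • x) < f (b • ρ • x)
      rw [smul_smul, smul_smul]
      exact hx (Set.mem_Ici.mpr (mul_nonneg ha' hρ.le))
        (Set.mem_Ici.mpr (mul_nonneg hb' hρ.le)) (mul_lt_mul_of_pos_right hab hρ)
    have hdec_scale : ∀ (x : EuclideanSpace ℝ (Fin n)) (ρ : ℝ), 0 < ρ →
        StrictAntiOn (fun t : ℝ => f (t • x)) (Set.Ici 0) →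
        StrictAntiOn (fun t : ℝ => f (t • (ρ • x))) (Set.Ici 0) := by
      intro x ρ hρ hx a ha b hb hab
      have ha' : (0:ℝ) ≤ a := ha
      have hb' : (0:ℝ) ≤ b := hb
      show f (b • ρ • x) < f (a • ρ • x)
      rw [smul_smul, smul_smul]
      exact hx (Set.mem_Ici.mpr (mul_nonneg ha' hρ.le))
        (Set.mem_Ici.mpr (mul_nonneg hb' hρ.le)) (mul_lt_mul_of_pos_right hab hρ)
    -- reference directions
    obtain ⟨x₀, hx₀⟩ : ∃ x₀, (∃ x, StrictMonoOn (fun t : ℝ => f (t • x)) (Set.Ici 0)) →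
        StrictMonoOn (fun t : ℝ => f (t • x₀)) (Set.Ici 0) := by
      by_cases h : ∃ x, StrictMonoOn (fun t : ℝ => f (t • x)) (Set.Ici 0)
      · exact ⟨h.choose, fun _ => h.choose_spec⟩
      · exact ⟨0, fun h' => absurd h' h⟩
    obtain ⟨y₀, hy₀⟩ : ∃ y₀, (∃ x, StrictAntiOn (fun t : ℝ => f (t • x)) (Set.Ici 0)) →
        StrictAntiOn (fun t : ℝ => f (t • y₀)) (Set.Ici 0) := by
      by_cases h : ∃ x, StrictAntiOn (fun t : ℝ => f (t • x)) (Set.Ici 0)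
      · exact ⟨h.choose, fun _ => h.choose_spec⟩
      · exact ⟨0, fun h' => absurd h' h⟩
    have exInc : ∀ x : EuclideanSpace ℝ (Fin n),
        StrictMonoOn (fun t : ℝ => f (t • x)) (Set.Ici 0) →
        ∃ s : ℝ, 0 ≤ s ∧ f (s • x₀) = f x := by
      intro x hx
      have hx0 := hx₀ ⟨x, hx⟩
      have himg := hinc x x₀ hx hx0
      have hmem : f x ∈ (fun t : ℝ => f (t • x)) '' Set.Ici 0 :=
        ⟨1, Set.mem_Ici.mpr zero_le_one, by simp⟩
      rw [himg] at hmem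
      obtain ⟨s, hs, hfs⟩ := hmem
      exact ⟨s, hs, hfs⟩
    have exDec : ∀ x : EuclideanSpace ℝ (Fin n),
        StrictAntiOn (fun t : ℝ => f (t • x)) (Set.Ici 0) →
        ∃ s : ℝ, 0 ≤ s ∧ f (s • y₀) = f x := by
      intro x hx
      have hy0 := hy₀ ⟨x, hx⟩
      have himg := hdec x y₀ hx hy0
      have hmem : f x ∈ (fun t : ℝ => f (t • x)) '' Set.Ici 0 :=
        ⟨1, Set.mem_Ici.mpr zero_le_one, by simp⟩
      rw [himg] at hmem
      obtain ⟨s, hs, hfs⟩ := hmem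
      exact ⟨s, hs, hfs⟩
    set p : EuclideanSpace ℝ (Fin n) → ℝ := fun x =>
      if hx : StrictMonoOn (fun t : ℝ => f (t • x)) (Set.Ici 0) then (exInc x hx).choose
      else if hx' : StrictAntiOn (fun t : ℝ => f (t • x)) (Set.Ici 0) then
        -((exDec x hx').choose)
      else 0 with hpdef
    set φ : ℝ → ℝ := fun s =>
      if 0 < s then f (s • x₀) else if s < 0 then f ((-s) • y₀) else 0 with hφdef
    have hφ_pos : ∀ s : ℝ, 0 < s → φ s = f (s • x₀) := by
      intro s hs; rw [hφdef]; simp only []; rw [if_pos hs]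
    have hφ_neg : ∀ s : ℝ, s < 0 → φ s = f ((-s) • y₀) := by
      intro s hs; rw [hφdef]; simp only []
      rw [if_neg (not_lt.mpr hs.le), if_pos hs]
    have hφ_zero : φ 0 = 0 := by
      rw [hφdef]; simp
    have hp_pos : ∀ (x : EuclideanSpace ℝ (Fin n))
        (hx : StrictMonoOn (fun t : ℝ => f (t • x)) (Set.Ici 0)),
        0 < p x ∧ f (p x • x₀) = f x := by
      intro x hx
      have h1 : p x = (exInc x hx).choose := by
        rw [hpdef]; simp only []; rw [dif_pos hx]
      obtain ⟨hs, hfs⟩ := (exInc x hx).choose_spec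
      have hspos : 0 < (exInc x hx).choose := by
        rcases hs.lt_or_eq with h | h
        · exact h
        · exfalso
          have hfx := hincf x hx
          rw [← h, zero_smul, h0] at hfs
          linarith
      rw [h1]
      exact ⟨hspos, hfs⟩
    have hp_neg : ∀ (x : EuclideanSpace ℝ (Fin n))
        (hx : StrictAntiOn (fun t : ℝ => f (t • x)) (Set.Ici 0)),
        p x < 0 ∧ f ((-(p x)) • y₀) = f x := by
      intro x hx
      have hnI : ¬ StrictMonoOn (fun t : ℝ => f (t • x)) (Set.Ici 0) :=
        fun h => hnotboth x h hx
      have h1 : p x = -((exDec x hx).choose) := by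
        rw [hpdef]; simp only []; rw [dif_neg hnI, dif_pos hx]
      obtain ⟨hs, hfs⟩ := (exDec x hx).choose_spec
      have hspos : 0 < (exDec x hx).choose := by
        rcases hs.lt_or_eq with h | h
        · exact h
        · exfalso
          have hfx := hdecf x hx
          rw [← h, zero_smul, h0] at hfs
          linarith
      rw [h1]
      constructor
      · linarith
      · rw [neg_neg]; exact hfs
    have hp_zero : ∀ x : EuclideanSpace ℝ (Fin n),
        ¬ StrictMonoOn (fun t : ℝ => f (t • x)) (Set.Ici 0) →
        ¬ StrictAntiOn (fun t : ℝ => f (t • x)) (Set.Ici 0) → p x = 0 := by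
      intro x h1 h2
      rw [hpdef]; simp only []; rw [dif_neg h1, dif_neg h2]
    have hp_sign_inc : ∀ x : EuclideanSpace ℝ (Fin n), 0 < p x →
        StrictMonoOn (fun t : ℝ => f (t • x)) (Set.Ici 0) := by
      intro x h
      by_contra hx
      by_cases hx' : StrictAntiOn (fun t : ℝ => f (t • x)) (Set.Ici 0)
      · have := (hp_neg x hx').1; linarith
      · have := hp_zero x hx hx'; linarith
    have hp_sign_dec : ∀ x : EuclideanSpace ℝ (Fin n), p x < 0 →
        StrictAntiOn (fun t : ℝ => f (t • x)) (Set.Ici 0) := by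
      intro x h
      by_contra hx
      by_cases hx' : StrictMonoOn (fun t : ℝ => f (t • x)) (Set.Ici 0)
      · have := (hp_pos x hx').1; linarith
      · have := hp_zero x hx' hx; linarith
    have hfx0 : ∀ x : EuclideanSpace ℝ (Fin n),
        ¬ StrictMonoOn (fun t : ℝ => f (t • x)) (Set.Ici 0) →
        ¬ StrictAntiOn (fun t : ℝ => f (t • x)) (Set.Ici 0) → f x = 0 := by
      intro x h1 h2
      rcases htri x with ⟨c, hc⟩ | h | h
      · have a := hc 1 zero_le_one
        have b := hc 0 le_rfl
        rw [one_smul] at a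
        rw [zero_smul, h0] at b
        rw [a, ← b]
      · exact absurd h h1
      · exact absurd h h2
    refine ⟨p, φ, ?_, ?_, ?_⟩
    · -- positive homogeneity
      intro x ρ hρ
      by_cases hx : StrictMonoOn (fun t : ℝ => f (t • x)) (Set.Ici 0)
      · have hx' := hinc_scale x ρ hρ hx
        obtain ⟨h1, h2⟩ := hp_pos x hx
        obtain ⟨h1', h2'⟩ := hp_pos _ hx'
        have hix₀ := (hx₀ ⟨x, hx⟩).injOn
        have heq : f (p (ρ • x) • x₀) = f ((ρ * p x) • x₀) := by
          rw [h2']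
          have := hEq (p x • x₀) x ρ hρ h2
          rw [smul_smul] at this
          exact this.symm
        exact hix₀ (Set.mem_Ici.mpr h1'.le)
          (Set.mem_Ici.mpr (mul_nonneg hρ.le h1.le)) heq
      by_cases hx' : StrictAntiOn (fun t : ℝ => f (t • x)) (Set.Ici 0)
      · have hxs := hdec_scale x ρ hρ hx'
        obtain ⟨h1, h2⟩ := hp_neg x hx'
        obtain ⟨h1', h2'⟩ := hp_neg _ hxs
        have hiy₀ := (hy₀ ⟨x, hx'⟩).injOn
        have heq : f ((-(p (ρ • x))) • y₀) = f ((ρ * (-(p x))) • y₀) := by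
          rw [h2']
          have := hEq ((-(p x)) • y₀) x ρ hρ h2
          rw [smul_smul] at this
          exact this.symm
        have := hiy₀ (Set.mem_Ici.mpr (by linarith : (0:ℝ) ≤ -(p (ρ • x))))
          (Set.mem_Ici.mpr (mul_nonneg hρ.le (by linarith : (0:ℝ) ≤ -(p x)))) heq
        linarith
      · have hnI : ¬ StrictMonoOn (fun t : ℝ => f (t • (ρ • x))) (Set.Ici 0) := by
          intro h
          have := hinc_scale (ρ • x) ρ⁻¹ (inv_pos.mpr hρ) h
          rw [inv_smul_smul₀ hρ.ne'] at this
          exact hx this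
        have hnD : ¬ StrictAntiOn (fun t : ℝ => f (t • (ρ • x))) (Set.Ici 0) := by
          intro h
          have := hdec_scale (ρ • x) ρ⁻¹ (inv_pos.mpr hρ) h
          rw [inv_smul_smul₀ hρ.ne'] at this
          exact hx' this
        rw [hp_zero _ hnI hnD, hp_zero x hx hx', mul_zero]
    · -- strict monotonicity of φ on the range of p
      rintro a ⟨u, hu⟩ b ⟨v, hv⟩ hab
      show φ a < φ b
      rcases lt_trichotomy (0:ℝ) a with h1 | h1 | h1
      · -- 0 < a < b
        have hX := hx₀ ⟨u, hp_sign_inc u (hu ▸ h1)⟩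
        rw [hφ_pos a h1, hφ_pos b (h1.trans hab)]
        exact hX (Set.mem_Ici.mpr h1.le) (Set.mem_Ici.mpr (h1.trans hab).le) hab
      · -- a = 0 < b
        have hb' : 0 < b := h1 ▸ hab
        have hX := hx₀ ⟨v, hp_sign_inc v (hv ▸ hb')⟩
        rw [← h1, hφ_zero, hφ_pos b hb']
        have := hX (Set.mem_Ici.mpr le_rfl) (Set.mem_Ici.mpr hb'.le) hb'
        simpa [h0] using this
      · -- a < 0
        have hY := hy₀ ⟨u, hp_sign_dec u (hu ▸ h1)⟩
        rw [hφ_neg a h1]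
        have hfa : f ((-a) • y₀) < 0 := by
          have := hY (Set.mem_Ici.mpr le_rfl) (Set.mem_Ici.mpr (by linarith : (0:ℝ) ≤ -a))
            (by linarith : (0:ℝ) < -a)
          simpa [h0] using this
        rcases lt_trichotomy (0:ℝ) b with h2 | h2 | h2
        · rw [hφ_pos b h2]
          have hX := hx₀ ⟨v, hp_sign_inc v (hv ▸ h2)⟩
          have hfb : 0 < f (b • x₀) := by
            have := hX (Set.mem_Ici.mpr le_rfl) (Set.mem_Ici.mpr h2.le) h2
            simpa [h0] using this
          linarith
        · rw [← h2, hφ_zero]; exact hfa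
        · rw [hφ_neg b h2]
          have := hY (Set.mem_Ici.mpr (by linarith : (0:ℝ) ≤ -b))
            (Set.mem_Ici.mpr (by linarith : (0:ℝ) ≤ -a)) (by linarith : -b < -a)
          exact this
    · -- f = φ ∘ p
      intro x
      by_cases hx : StrictMonoOn (fun t : ℝ => f (t • x)) (Set.Ici 0)
      · obtain ⟨h1, h2⟩ := hp_pos x hx
        rw [hφ_pos _ h1]
        exact h2.symm
      by_cases hx' : StrictAntiOn (fun t : ℝ => f (t • x)) (Set.Ici 0)
      · obtain ⟨h1, h2⟩ := hp_neg x hx'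
        rw [hφ_neg _ h1]
        exact h2.symm
      · rw [hp_zero x hx hx', hφ_zero]
        exact hfx0 x hx hx'
end

section
/- Let f : ℝⁿ → ℝ and p : ℝⁿ → ℝ be arbitrary functions. Then f and p have the same sublevel sets, i.e. the family of sets {L≤_{f,x} : x ∈ ℝⁿ} equals the family of sets {L≤_{p,x} : x ∈ ℝⁿ}, if and only if there exists a function φ : ℝ → ℝ that is strictly increasing on the range of p such that f(x) = φ(p(x)) for all x ∈ ℝⁿ. -/
/-- Two functions `f, p : ℝⁿ → ℝ` have the same sublevel sets
if and only if `f = φ ∘ p` for some `φ` strictly increasing on the range of `p`. -/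
theorem stmt_10 {n : ℕ} (f p : EuclideanSpace ℝ (Fin n) → ℝ) :
    ({s : Set (EuclideanSpace ℝ (Fin n)) | ∃ x, s = {y | f y ≤ f x}} =
      {s : Set (EuclideanSpace ℝ (Fin n)) | ∃ x, s = {y | p y ≤ p x}}) ↔
    (∃ φ : ℝ → ℝ, StrictMonoOn φ (Set.range p) ∧ ∀ x, f x = φ (p x)) := by
  classical
  constructor
  · intro h
    have key : ∀ x, {y | f y ≤ f x} = {y | p y ≤ p x} := by
      intro x
      obtain ⟨x', hx'⟩ : ∃ x', {y | f y ≤ f x} = {y | p y ≤ p x'} := by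
        have hm : {y | f y ≤ f x} ∈
            {s : Set (EuclideanSpace ℝ (Fin n)) | ∃ x, s = {y | f y ≤ f x}} := ⟨x, rfl⟩
        rw [h] at hm; exact hm
      obtain ⟨x'', hx''⟩ : ∃ x'', {y | p y ≤ p x} = {y | f y ≤ f x''} := by
        have hm : {y | p y ≤ p x} ∈
            {s : Set (EuclideanSpace ℝ (Fin n)) | ∃ x, s = {y | p y ≤ p x}} := ⟨x, rfl⟩
        rw [← h] at hm; exact hm
      have h1 : p x ≤ p x' := by
        have : x ∈ {y | f y ≤ f x} := Set.mem_setOf_eq ▸ le_refl (f x)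
        rw [hx'] at this; exact this
      have h2 : f x ≤ f x'' := by
        have : x ∈ {y | p y ≤ p x} := Set.mem_setOf_eq ▸ le_refl (p x)
        rw [hx''] at this; exact this
      apply Set.Subset.antisymm
      · intro y hy
        have : y ∈ {y | f y ≤ f x''} := le_trans hy h2
        rw [← hx''] at this; exact this
      · intro y hy
        have : y ∈ {y | p y ≤ p x'} := le_trans hy h1
        rw [← hx'] at this; exact this
    have iff : ∀ x y, f y ≤ f x ↔ p y ≤ p x := fun x y => Set.ext_iff.mp (key x) y
    set φ : ℝ → ℝ := fun t => if h : ∃ a, p a = t then f h.choose else 0 with hφdef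
    have hφ : ∀ x, φ (p x) = f x := by
      intro x
      have hex : ∃ a, p a = p x := ⟨x, rfl⟩
      have ha : p hex.choose = p x := hex.choose_spec
      rw [hφdef]
      simp only [dif_pos hex]
      exact le_antisymm ((iff x hex.choose).mpr ha.le) ((iff hex.choose x).mpr ha.ge)
    refine ⟨φ, ?_, fun x => (hφ x).symm⟩
    rintro s ⟨a, rfl⟩ t ⟨b, rfl⟩ hst
    rw [hφ a, hφ b]
    by_contra hle
    exact absurd ((iff a b).mp (not_lt.mp hle)) (not_le.mpr hst)
  · rintro ⟨φ, hmono, hf⟩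
    have key : ∀ x, {y | f y ≤ f x} = {y | p y ≤ p x} := by
      intro x
      ext y
      simp only [Set.mem_setOf_eq, hf]
      exact hmono.le_iff_le ⟨y, rfl⟩ ⟨x, rfl⟩
    ext s
    constructor
    · rintro ⟨x, rfl⟩; exact ⟨x, key x⟩
    · rintro ⟨x, rfl⟩; exact ⟨x, (key x).symm⟩
end

section
/- Let f : ℝⁿ → ℝ be a scaling-invariant function with respect to 0 with f(0) = 0 that is lower semi-continuous, and assume that for every x ∈ ℝⁿ there exists ε > 0 such that the function f_x : t ↦ f(tx) is continuous on [0, ε]. Then the following are equivalent: (i) 0 is the unique global argmin of f, i.e. f(x) > 0 for all x ≠ 0; (ii) for every x ∈ ℝⁿ with x ≠ 0, the function f_x is strictly increasing on [0,∞); (iii) for every x ∈ ℝⁿ, the sublevel set L≤_{f,x} = {y ∈ ℝⁿ : f(y) ≤ f(x)} is compact. -/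
open Filter Topology

/-- For a lower semi-continuous scaling-invariant function `f`
w.r.t. `0` with `f 0 = 0` whose restrictions `t ↦ f (t • x)` are continuous on some
`[0, ε]`, the following are equivalent: (i) `0` is the unique global argmin
(`f x > 0` for `x ≠ 0`); (ii) every restriction along a nonzero direction is strictly
increasing on `[0,∞)`; (iii) all sublevel sets are compact. -/
theorem stmt_11 {n : ℕ} (f : EuclideanSpace ℝ (Fin n) → ℝ)
    (hsi : ∀ (x y : EuclideanSpace ℝ (Fin n)) (ρ : ℝ), 0 < ρ →
      (f x ≤ f y ↔ f (ρ • x) ≤ f (ρ • y)))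
    (h0 : f 0 = 0)
    (hlsc : LowerSemicontinuous f)
    (hcont : ∀ x : EuclideanSpace ℝ (Fin n), ∃ ε : ℝ, 0 < ε ∧
      ContinuousOn (fun t : ℝ => f (t • x)) (Set.Icc 0 ε)) :
    ((∀ x : EuclideanSpace ℝ (Fin n), x ≠ 0 → 0 < f x) ↔
      (∀ x : EuclideanSpace ℝ (Fin n), x ≠ 0 →
        StrictMonoOn (fun t : ℝ => f (t • x)) (Set.Ici 0))) ∧
    ((∀ x : EuclideanSpace ℝ (Fin n), x ≠ 0 → 0 < f x) ↔
      (∀ x : EuclideanSpace ℝ (Fin n), IsCompact {y | f y ≤ f x})) := by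
  -- If a nonnegative sequence tends to 0, then f (g k • x) tends to 0.
  have hzero : ∀ x : EuclideanSpace ℝ (Fin n), ∀ g : ℕ → ℝ,
      (∀ k, 0 ≤ g k) → Tendsto g atTop (𝓝 0) →
      Tendsto (fun k => f (g k • x)) atTop (𝓝 0) := by
    intro x g hgpos hg0
    obtain ⟨ε, hε, hc⟩ := hcont x
    have hmem : ∀ᶠ k in atTop, g k ∈ Set.Icc (0 : ℝ) ε := by
      filter_upwards [hg0.eventually_lt_const hε] with k hk
      exact ⟨hgpos k, hk.le⟩
    have hcw : ContinuousWithinAt (fun t : ℝ => f (t • x)) (Set.Icc 0 ε) 0 :=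
      hc 0 ⟨le_refl 0, hε.le⟩
    have := hcw.tendsto.comp (tendsto_nhdsWithin_iff.2 ⟨hg0, hmem⟩)
    simpa [Function.comp_def, h0] using this
  -- Key lemma: under (i), f (a • x) < f x for 0 < a < 1 and x ≠ 0.
  have keyA : (∀ z : EuclideanSpace ℝ (Fin n), z ≠ 0 → 0 < f z) →
      ∀ x : EuclideanSpace ℝ (Fin n), x ≠ 0 → ∀ a : ℝ, 0 < a → a < 1 →
      f (a • x) < f x := by
    intro hpos x hx a ha ha1
    by_contra hcon
    push_neg at hcon
    have hn : ∀ m : ℕ, f x ≤ f (a ^ m • x) := by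
      intro m
      induction m with
      | zero => simp
      | succ m ih =>
        refine ih.trans ?_
        have := (hsi x (a • x) (a ^ m) (pow_pos ha m)).mp hcon
        rw [smul_smul] at this
        calc f (a ^ m • x) ≤ f ((a ^ m * a) • x) := this
          _ = f (a ^ (m + 1) • x) := by rw [pow_succ]
    have hlim := hzero x (fun m => a ^ m) (fun m => (pow_pos ha m).le)
      (tendsto_pow_atTop_nhds_zero_of_lt_one ha.le ha1)
    exact absurd (ge_of_tendsto' hlim hn) (hpos x hx).not_ge
  have i_ii : (∀ z : EuclideanSpace ℝ (Fin n), z ≠ 0 → 0 < f z) →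
      ∀ x : EuclideanSpace ℝ (Fin n), x ≠ 0 →
      StrictMonoOn (fun t : ℝ => f (t • x)) (Set.Ici 0) := by
    intro hpos x hx s hs t ht hst
    simp only [Set.mem_Ici] at hs ht
    rcases eq_or_lt_of_le hs with rfl | hs0
    · have htpos : (0 : ℝ) < t := hst
      have : t • x ≠ 0 := smul_ne_zero htpos.ne' hx
      simpa [h0] using hpos (t • x) this
    · have htpos : (0 : ℝ) < t := hs0.trans hst
      have ha : 0 < s / t := div_pos hs0 htpos
      have ha1 : s / t < 1 := (div_lt_one htpos).2 hst
      have := keyA hpos (t • x) (smul_ne_zero htpos.ne' hx) (s / t) ha ha1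
      simpa [smul_smul, div_mul_cancel₀ s htpos.ne'] using this
  have ii_i : (∀ x : EuclideanSpace ℝ (Fin n), x ≠ 0 →
      StrictMonoOn (fun t : ℝ => f (t • x)) (Set.Ici 0)) →
      ∀ x : EuclideanSpace ℝ (Fin n), x ≠ 0 → 0 < f x := by
    intro hmono x hx
    have := hmono x hx Set.self_mem_Ici (by norm_num : (1:ℝ) ∈ Set.Ici (0:ℝ)) one_pos
    simpa [h0] using this
  have i_iii : (∀ z : EuclideanSpace ℝ (Fin n), z ≠ 0 → 0 < f z) →
      ∀ x : EuclideanSpace ℝ (Fin n), IsCompact {y | f y ≤ f x} := by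
    intro hpos x
    have hclosed : IsClosed {y | f y ≤ f x} := by
      have := lowerSemicontinuous_iff_isClosed_preimage.mp hlsc (f x)
      simpa [Set.preimage, Set.Iic] using this
    have hbdd : Bornology.IsBounded {y | f y ≤ f x} := by
      by_contra hb
      rw [isBounded_iff_forall_norm_le] at hb
      push_neg at hb
      have hsel : ∀ k : ℕ, ∃ y, f y ≤ f x ∧ (k : ℝ) + 1 < ‖y‖ := by
        intro k
        obtain ⟨y, hyS, hy⟩ := hb ((k : ℝ) + 1)
        exact ⟨y, hyS, hy⟩
      choose y hyS hyn using hsel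
      have hypos : ∀ k, 0 < ‖y k‖ := fun k => lt_of_le_of_lt (by positivity) (hyn k)
      set u : ℕ → EuclideanSpace ℝ (Fin n) := fun k => ‖y k‖⁻¹ • y k with hu
      have humem : ∀ k, u k ∈ Metric.sphere (0 : EuclideanSpace ℝ (Fin n)) 1 := by
        intro k
        rw [mem_sphere_zero_iff_norm]
        simp [hu, norm_smul, abs_of_pos (inv_pos.2 (hypos k)),
          inv_mul_cancel₀ (hypos k).ne']
      obtain ⟨z, hz, φ, hφ, hconv⟩ :=
        (isCompact_sphere (0 : EuclideanSpace ℝ (Fin n)) 1).tendsto_subseq humem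
      have hz0 : z ≠ 0 := by
        have hn1 : ‖z‖ = 1 := mem_sphere_zero_iff_norm.mp hz
        intro h
        rw [h] at hn1; simp at hn1
      have hfz : 0 < f z := hpos z hz0
      have hle : ∀ k, f (u k) ≤ f (‖y k‖⁻¹ • x) :=
        fun k => (hsi (y k) x (‖y k‖⁻¹) (inv_pos.2 (hypos k))).mp (hyS k)
      have hinv : Tendsto (fun k : ℕ => ‖y k‖⁻¹) atTop (𝓝 0) := by
        apply squeeze_zero (fun k => (inv_pos.2 (hypos k)).le)
          (g := fun k : ℕ => ((k : ℝ) + 1)⁻¹)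
          (fun k => inv_anti₀ (by positivity) (hyn k).le)
        simpa [one_div] using (tendsto_one_div_add_atTop_nhds_zero_nat : Tendsto (fun n : ℕ => 1 / ((n : ℝ) + 1)) atTop (𝓝 0))
      have hinvφ : Tendsto (fun k : ℕ => ‖y (φ k)‖⁻¹) atTop (𝓝 0) :=
        hinv.comp hφ.tendsto_atTop
      have hRHS : Tendsto (fun k => f (‖y (φ k)‖⁻¹ • x)) atTop (𝓝 0) :=
        hzero x (fun k => ‖y (φ k)‖⁻¹) (fun k => (inv_pos.2 (hypos (φ k))).le) hinvφ
      obtain ⟨k, h1, h2⟩ := ((hconv.eventually (hlsc z (f z / 2) (half_lt_self hfz))).and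
        (hRHS.eventually_lt_const (half_pos hfz))).exists
      exact absurd ((hle (φ k)).trans_lt h2) (not_lt.2 h1.le)
    exact Metric.isCompact_of_isClosed_isBounded hclosed hbdd
  have iii_i : (∀ x : EuclideanSpace ℝ (Fin n), IsCompact {y | f y ≤ f x}) →
      ∀ x : EuclideanSpace ℝ (Fin n), x ≠ 0 → 0 < f x := by
    intro hcomp x hx
    by_contra hcon
    push_neg at hcon
    obtain ⟨R, hR⟩ := isBounded_iff_forall_norm_le.mp (hcomp 0).isBounded
    have hxpos : 0 < ‖x‖ := norm_pos_iff.2 hx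
    have hR0 : 0 ≤ R := by
      have := hR 0 (by simp [h0])
      simpa using this
    set ρ : ℝ := (R + 1) / ‖x‖ with hρdef
    have hρ : 0 < ρ := div_pos (by linarith) hxpos
    have hmem : f (ρ • x) ≤ f 0 := by
      have := (hsi x 0 ρ hρ).mp (by rw [h0]; exact hcon)
      simpa using this
    have hnorm := hR (ρ • x) hmem
    rw [norm_smul, Real.norm_eq_abs, abs_of_pos hρ, hρdef,
      div_mul_cancel₀ _ hxpos.ne'] at hnorm
    linarith
  exact ⟨⟨fun h => i_ii h, fun h => ii_i h⟩, ⟨fun h => i_iii h, fun h => iii_i h⟩⟩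
end

section
/- Let f : ℝⁿ → ℝ be a lower semi-continuous scaling-invariant function with respect to 0 with f(0) = 0 such that 0 is the unique global argmin of f (i.e. f(y) > 0 for all y ≠ 0). Assume that for every x ∈ ℝⁿ there exists ε > 0 such that the function f_x : t ↦ f(tx) is continuous on [0, ε], and that for all nonzero x, y ∈ ℝⁿ the functions f_x and f_y have the same image. Then for every x ∈ ℝⁿ and every nonzero d ∈ ℝⁿ, there exists a unique t ≥ 0 such that f(t·d) = f(x), i.e. every half-line with origin 0 intersects the level set L_{f,x} = {y ∈ ℝⁿ : f(y) = f(x)} at exactly one point. -/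
/-- For a lower semi-continuous scaling-invariant function `f`
w.r.t. `0` with `f 0 = 0`, unique global argmin `0`, restrictions continuous near `0`
and sharing the same image along nonzero directions, every half-line from the origin
meets each level set at exactly one point. -/
theorem stmt_12 {n : ℕ} (f : EuclideanSpace ℝ (Fin n) → ℝ)
    (hsi : ∀ (x y : EuclideanSpace ℝ (Fin n)) (ρ : ℝ), 0 < ρ →
      (f x ≤ f y ↔ f (ρ • x) ≤ f (ρ • y)))
    (h0 : f 0 = 0)
    (hlsc : LowerSemicontinuous f)
    (hmin : ∀ y : EuclideanSpace ℝ (Fin n), y ≠ 0 → 0 < f y)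
    (hcont : ∀ x : EuclideanSpace ℝ (Fin n), ∃ ε : ℝ, 0 < ε ∧
      ContinuousOn (fun t : ℝ => f (t • x)) (Set.Icc 0 ε))
    (himage : ∀ x y : EuclideanSpace ℝ (Fin n), x ≠ 0 → y ≠ 0 →
      (fun t : ℝ => f (t • x)) '' Set.Ici 0 = (fun t : ℝ => f (t • y)) '' Set.Ici 0) :
    ∀ x : EuclideanSpace ℝ (Fin n), ∀ d : EuclideanSpace ℝ (Fin n), d ≠ 0 →
      ∃! t : ℝ, 0 ≤ t ∧ f (t • d) = f x := by
  intro x d hd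
  -- Key: no two distinct nonnegative parameters give the same value along d.
  have key : ∀ t s : ℝ, 0 ≤ t → t < s → f (t • d) = f (s • d) → False := by
    intro t s ht hts heq
    have hs : 0 < s := lt_of_le_of_lt ht hts
    rcases ht.lt_or_eq with ht' | ht'
    · -- 0 < t < s
      set r : ℝ := t / s with hrdef
      have hr0 : 0 < r := div_pos ht' hs
      have hr1 : r < 1 := (div_lt_one hs).mpr hts
      have hρ : ∀ ρ : ℝ, 0 < ρ → f ((ρ * t) • d) = f ((ρ * s) • d) := by
        intro ρ hρ
        have h1 := (hsi (t • d) (s • d) ρ hρ).mp heq.le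
        have h2 := (hsi (s • d) (t • d) ρ hρ).mp heq.ge
        simp only [smul_smul] at h1 h2
        exact le_antisymm h1 h2
      have hind : ∀ m : ℕ, f ((r ^ m * t) • d) = f (t • d) := by
        intro m
        induction m with
        | zero => simp
        | succ m ih =>
          have h1 := hρ (r ^ (m + 1)) (pow_pos hr0 _)
          have h2 : r ^ (m + 1) * s = r ^ m * t := by
            rw [hrdef]
            field_simp
            linear_combination (t * t ^ m * s⁻¹ ^ m) * (mul_inv_cancel₀ hs.ne')
          rw [h2] at h1
          rw [h1, ih]
      obtain ⟨ε, hε, hc⟩ := hcont d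
      have hcw : ContinuousWithinAt (fun t : ℝ => f (t • d)) (Set.Icc 0 ε) 0 :=
        hc 0 ⟨le_refl _, hε.le⟩
      have htend : Filter.Tendsto (fun m : ℕ => r ^ m * t) Filter.atTop (nhds 0) := by
        have h := tendsto_pow_atTop_nhds_zero_of_lt_one hr0.le hr1
        simpa using h.mul_const t
      have hev : ∀ᶠ m in Filter.atTop, r ^ m * t ∈ Set.Icc (0 : ℝ) ε := by
        filter_upwards [htend.eventually (eventually_le_nhds hε)] with m hm
        exact ⟨le_of_lt (mul_pos (pow_pos hr0 m) ht'), hm⟩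
      have hT : Filter.Tendsto (fun m : ℕ => f ((r ^ m * t) • d)) Filter.atTop
          (nhds (f ((0 : ℝ) • d))) :=
        hcw.tendsto.comp (tendsto_nhdsWithin_iff.mpr ⟨htend, hev⟩)
      simp only [hind] at hT
      have h0' : f ((0 : ℝ) • d) = 0 := by simpa using h0
      rw [h0'] at hT
      have hzero : f (t • d) = 0 := tendsto_nhds_unique tendsto_const_nhds hT
      have hpos : 0 < f (t • d) := hmin _ (smul_ne_zero ht'.ne' hd)
      linarith
    · -- t = 0 : then f (s • d) = 0 but s • d ≠ 0
      rw [← ht'] at heq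
      have : f ((0 : ℝ) • d) = 0 := by simpa using h0
      rw [this] at heq
      have hpos : 0 < f (s • d) := hmin _ (smul_ne_zero hs.ne' hd)
      linarith
  have uniq : ∀ t s : ℝ, 0 ≤ t → 0 ≤ s → f (t • d) = f (s • d) → t = s := by
    intro t s ht hs heq
    rcases lt_trichotomy t s with h | h | h
    · exact absurd heq fun he => key t s ht h he
    · exact h
    · exact absurd heq.symm fun he => key s t hs h he
  by_cases hx : x = 0
  · refine ⟨0, ⟨le_refl _, by simpa [hx] using h0⟩, ?_⟩
    rintro s ⟨hs0, hs⟩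
    have h00 : f ((0 : ℝ) • d) = f x := by simpa [hx] using h0
    exact uniq s 0 hs0 (le_refl _) (by rw [hs, h00])
  · have hmem : f x ∈ (fun t : ℝ => f (t • x)) '' Set.Ici 0 :=
      ⟨1, by norm_num, by simp⟩
    rw [himage x d hx hd] at hmem
    obtain ⟨t, ht0, hft⟩ := hmem
    have hft' : f (t • d) = f x := hft
    refine ⟨t, ⟨ht0, hft'⟩, ?_⟩
    rintro s ⟨hs0, hfs⟩
    exact uniq s t hs0 ht0 (by rw [hfs, hft'])
end

section
/- Let f : ℝⁿ → ℝ be a continuous scaling-invariant function with respect to 0 with f(0) = 0 such that f(x) > 0 for all x ≠ 0. Then there exist a function φ : ℝ → ℝ with φ(0) = 0 that is strictly increasing and continuous on [0,∞), and two real numbers 0 < m ≤ M, such that for all x ∈ ℝⁿ with x ≠ 0: φ(m·‖x‖) ≤ f(x) ≤ φ(M·‖x‖), where ‖·‖ is the Euclidean norm. -/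
/-- For a continuous scaling-invariant function `f` w.r.t. `0` with
`f 0 = 0` and `f x > 0` for `x ≠ 0`, there exist `φ` with `φ 0 = 0`, strictly
increasing and continuous on `[0,∞)`, and `0 < m ≤ M` such that
`φ (m ‖x‖) ≤ f x ≤ φ (M ‖x‖)` for all `x ≠ 0`. -/
theorem stmt_14 {n : ℕ} (f : EuclideanSpace ℝ (Fin n) → ℝ)
    (hf : Continuous f)
    (hsi : ∀ (x y : EuclideanSpace ℝ (Fin n)) (ρ : ℝ), 0 < ρ →
      (f x ≤ f y ↔ f (ρ • x) ≤ f (ρ • y)))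
    (h0 : f 0 = 0)
    (hpos : ∀ x : EuclideanSpace ℝ (Fin n), x ≠ 0 → 0 < f x) :
    ∃ (φ : ℝ → ℝ) (m M : ℝ),
      φ 0 = 0 ∧
      StrictMonoOn φ (Set.Ici 0) ∧
      ContinuousOn φ (Set.Ici 0) ∧
      0 < m ∧ m ≤ M ∧
      ∀ x : EuclideanSpace ℝ (Fin n), x ≠ 0 →
        φ (m * ‖x‖) ≤ f x ∧ f x ≤ φ (M * ‖x‖) := by
  rcases Nat.eq_zero_or_pos n with hn | hn
  · subst hn
    refine ⟨id, 1, 1, rfl, strictMono_id.strictMonoOn _, continuous_id.continuousOn,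
      one_pos, le_refl 1, ?_⟩
    intro x hx
    exact absurd (Subsingleton.elim x 0) hx
  -- key lemma: strict decrease along rays toward 0
  have key : ∀ x : EuclideanSpace ℝ (Fin n), x ≠ 0 → ∀ ρ : ℝ, 0 < ρ → ρ < 1 →
      f (ρ • x) < f x := by
    intro x hx ρ hρ0 hρ1
    by_contra h
    push_neg at h
    have hchain : ∀ k : ℕ, f x ≤ f (ρ ^ k • x) := by
      intro k
      induction k with
      | zero => simp
      | succ k ih =>
        refine ih.trans ?_
        have := (hsi x (ρ • x) (ρ ^ k) (pow_pos hρ0 k)).mp h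
        rwa [smul_smul, ← pow_succ] at this
    have hlim : Filter.Tendsto (fun k : ℕ => f (ρ ^ k • x)) Filter.atTop (nhds 0) := by
      have h1 : Filter.Tendsto (fun k : ℕ => (ρ : ℝ) ^ k) Filter.atTop (nhds 0) :=
        tendsto_pow_atTop_nhds_zero_of_lt_one hρ0.le hρ1
      have h2 : Filter.Tendsto (fun k : ℕ => ρ ^ k • x) Filter.atTop
          (nhds (0 : EuclideanSpace ℝ (Fin n))) := by
        simpa using h1.smul_const x
      have := (hf.tendsto 0).comp h2
      simpa [h0, Function.comp_def] using this
    have : f x ≤ 0 := ge_of_tendsto hlim (Filter.Eventually.of_forall hchain)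
    exact absurd this (not_le.mpr (hpos x hx))
  -- fixed unit vector
  set e : EuclideanSpace ℝ (Fin n) := EuclideanSpace.single (⟨0, hn⟩ : Fin n) (1 : ℝ)
    with he_def
  have he : ‖e‖ = 1 := by simp [he_def, EuclideanSpace.norm_single]
  have he0 : e ≠ 0 := by
    intro h; rw [h] at he; simp at he
  set φ : ℝ → ℝ := fun t => f (t • e) with hφ_def
  have hφ0 : φ 0 = 0 := by simp [hφ_def, h0]
  have hφc : Continuous φ := hf.comp (continuous_id.smul continuous_const)
  have hφmono : StrictMonoOn φ (Set.Ici 0) := by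
    intro s hs t ht hst
    rcases eq_or_lt_of_le (Set.mem_Ici.mp hs) with h | h
    · have ht0 : (0:ℝ) < t := lt_of_le_of_lt (le_of_eq h) hst
      have hs0 : φ s = 0 := by rw [← h]; exact hφ0
      rw [hs0]
      exact hpos _ (smul_ne_zero ht0.ne' he0)
    · have htne : (t : ℝ) ≠ 0 := (h.trans hst).ne'
      have heq : φ s = f ((s / t) • (t • e)) := by
        rw [smul_smul, div_mul_cancel₀ _ htne]
      rw [heq]
      exact key (t • e) (smul_ne_zero htne he0) (s / t)
        (div_pos h (h.trans hst)) ((div_lt_one (h.trans hst)).mpr hst)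
  -- min and max on unit sphere
  have hS : IsCompact (Metric.sphere (0 : EuclideanSpace ℝ (Fin n)) 1) :=
    isCompact_sphere 0 1
  have heS : e ∈ Metric.sphere (0 : EuclideanSpace ℝ (Fin n)) 1 := by
    simp [mem_sphere_zero_iff_norm, he]
  obtain ⟨u, huS, humin⟩ := hS.exists_isMinOn ⟨e, heS⟩ hf.continuousOn
  obtain ⟨v, hvS, hvmax⟩ := hS.exists_isMaxOn ⟨e, heS⟩ hf.continuousOn
  have hu0 : u ≠ 0 := by
    intro h; rw [h] at huS; simp at huS
  have hv0 : v ≠ 0 := by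
    intro h; rw [h] at hvS; simp at hvS
  -- choose m
  have hm_ex : ∃ m : ℝ, 0 < m ∧ φ m < f u := by
    have h1 : ∀ᶠ t in nhds (0:ℝ), φ t < f u := by
      have ht : Filter.Tendsto φ (nhds 0) (nhds 0) := by
        simpa [hφ0] using hφc.tendsto 0
      exact ht.eventually_lt_const (hpos u hu0)
    have h2 : ∀ᶠ t in nhdsWithin (0:ℝ) (Set.Ioi 0), φ t < f u :=
      h1.filter_mono nhdsWithin_le_nhds
    obtain ⟨m, hm1, hm2⟩ := (h2.and self_mem_nhdsWithin).exists
    exact ⟨m, hm2, hm1⟩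
  obtain ⟨m, hm0, hm⟩ := hm_ex
  -- choose t0 with f v ≤ φ t0
  have ht0_ex : ∃ t0 : ℝ, 0 < t0 ∧ f v ≤ φ t0 := by
    by_contra h
    push_neg at h
    have hlt : ∀ ρ : ℝ, 0 < ρ → f e < f (ρ • v) := by
      intro ρ hρ
      have h1 : φ (1 / ρ) < f v := h (1 / ρ) (by positivity)
      have h2 := hsi v ((1 / ρ) • e) ρ hρ
      rw [smul_smul, mul_one_div, div_self hρ.ne', one_smul] at h2
      by_contra hc
      push_neg at hc
      exact absurd (h2.mpr hc) (not_le.mpr h1)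
    have hlim : Filter.Tendsto (fun k : ℕ => f ((1 / (k + 1) : ℝ) • v))
        Filter.atTop (nhds 0) := by
      have h1 : Filter.Tendsto (fun k : ℕ => (1 / (k + 1) : ℝ)) Filter.atTop (nhds 0) :=
        tendsto_one_div_add_atTop_nhds_zero_nat
      have h2 : Filter.Tendsto (fun k : ℕ => (1 / (k + 1) : ℝ) • v) Filter.atTop
          (nhds (0 : EuclideanSpace ℝ (Fin n))) := by simpa using h1.smul_const v
      have := (hf.tendsto 0).comp h2
      simpa [h0, Function.comp_def] using this
    have : f e ≤ 0 := ge_of_tendsto hlim (Filter.Eventually.of_forall fun k =>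
      (hlt (1 / (k + 1) : ℝ) (by positivity)).le)
    exact absurd this (not_le.mpr (hpos e he0))
  obtain ⟨t0, ht00, ht0⟩ := ht0_ex
  refine ⟨φ, m, max t0 m, hφ0, hφmono, hφc.continuousOn, hm0, le_max_right _ _, ?_⟩
  have hφM : f v ≤ φ (max t0 m) :=
    ht0.trans (hφmono.monotoneOn (Set.mem_Ici.mpr ht00.le)
      (Set.mem_Ici.mpr (le_trans ht00.le (le_max_left _ _))) (le_max_left _ _))
  intro x hx
  have hr : (0:ℝ) < ‖x‖ := norm_pos_iff.mpr hx
  have hu'S : ‖x‖⁻¹ • x ∈ Metric.sphere (0 : EuclideanSpace ℝ (Fin n)) 1 := by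
    rw [mem_sphere_zero_iff_norm]
    exact norm_smul_inv_norm (𝕜 := ℝ) hx
  have hru' : ‖x‖ • (‖x‖⁻¹ • x) = x := by
    rw [smul_smul, mul_inv_cancel₀ hr.ne', one_smul]
  constructor
  · have h1 : f (m • e) ≤ f (‖x‖⁻¹ • x) := le_trans hm.le (humin hu'S)
    have h2 := (hsi (m • e) (‖x‖⁻¹ • x) ‖x‖ hr).mp h1
    rw [hru', smul_smul, mul_comm] at h2
    exact h2
  · have h1 : f (‖x‖⁻¹ • x) ≤ f ((max t0 m) • e) := le_trans (hvmax hu'S) hφM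
    have h2 := (hsi (‖x‖⁻¹ • x) ((max t0 m) • e) ‖x‖ hr).mp h1
    rw [hru', smul_smul, mul_comm] at h2
    exact h2
end

section
/- Let f : ℝⁿ → ℝ be a continuously differentiable scaling-invariant function with respect to 0. Then for all x, y ∈ ℝⁿ, if f(y) = f(x) then Df(y)(y) = Df(x)(x); i.e. the level set L_{f,x} = {y ∈ ℝⁿ : f(y) = f(x)} is contained in the set {y ∈ ℝⁿ : Df(y)(y) = Df(x)(x)}. -/
/-- For a continuously differentiable scaling-invariant function
`f` w.r.t. `0`, all points of a level set share the same value of `Df(y)(y)`. -/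
theorem stmt_16 {n : ℕ} (f : EuclideanSpace ℝ (Fin n) → ℝ)
    (hf : ContDiff ℝ 1 f)
    (hsi : ∀ (x y : EuclideanSpace ℝ (Fin n)) (ρ : ℝ), 0 < ρ →
      (f x ≤ f y ↔ f (ρ • x) ≤ f (ρ • y))) :
    ∀ x y : EuclideanSpace ℝ (Fin n), f y = f x →
      fderiv ℝ f y y = fderiv ℝ f x x := by
  intro x y hxy
  have hfd : ∀ z : EuclideanSpace ℝ (Fin n), HasFDerivAt f (fderiv ℝ f z) z := fun z =>
    ((hf.differentiable one_ne_zero) z).hasFDerivAt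
  have key : ∀ ρ : ℝ, 0 < ρ → f (ρ • y) = f (ρ • x) := fun ρ hρ =>
    le_antisymm ((hsi y x ρ hρ).mp (le_of_eq hxy)) ((hsi x y ρ hρ).mp (le_of_eq hxy.symm))
  have deriv_at : ∀ z : EuclideanSpace ℝ (Fin n),
      HasDerivAt (fun ρ : ℝ => f (ρ • z)) (fderiv ℝ f z z) 1 := by
    intro z
    have h1 : HasDerivAt (fun ρ : ℝ => ρ • z) z 1 := by
      simpa using (hasDerivAt_id (1 : ℝ)).smul_const z
    have h2 : HasFDerivAt f (fderiv ℝ f z) ((1 : ℝ) • z) := by simpa using hfd z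
    exact (h2.comp_hasDerivAt 1 h1)
  have heq : (fun ρ : ℝ => f (ρ • y)) =ᶠ[nhds 1] (fun ρ : ℝ => f (ρ • x)) := by
    filter_upwards [isOpen_Ioi.eventually_mem (show (1 : ℝ) ∈ Set.Ioi 0 by norm_num)] with ρ hρ
    exact key ρ hρ
  have dy' : HasDerivAt (fun ρ : ℝ => f (ρ • x)) (fderiv ℝ f y y) 1 :=
    (deriv_at y).congr_of_eventuallyEq heq.symm
  exact dy'.unique (deriv_at x)
end
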